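/- arXiv:1901.01917 — 3 statements merged into one kernel-verified Lean document; each statement's English description precedes it below -/
import Mathlib

section
/- Let B be a board (rational convex polygon), ℙ a piece with two basic moves, and q ≥ 1. Then z = (z₁, z₂, …, z_q) ∈ B^q has full rank (rank 2q) if and only if z' = (z₁, …, z_q, z_q) ∈ B^{q+1} has full rank (rank 2(q+1)). -/
/-! Common definitions: boards, pieces, hyperplane arrangements, rank,
antipode maps, trajectories, augmentations, crossing points, denominators. -/

noncomputable section

/-- A point of the plane. -/
abbrev Pt : Type := ℝ × ℝ

/-- Dot product on `ℝ²`. -/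
def dotp (u v : Pt) : ℝ := u.1 * v.1 + u.2 * v.2

/-- A board: a rational convex polygon `{z | ∀ j, a_j · z ≤ β_j}`, bounded, with
nonempty interior, each defining line meeting the board in at least two points (an edge). -/
structure Board where
  s : ℕ
  A : Fin s → Pt
  β : Fin s → ℝ
  A_rat : ∀ j, ∃ p q : ℚ, A j = ((p : ℝ), (q : ℝ))
  β_rat : ∀ j, ∃ p : ℚ, β j = (p : ℝ)
  bounded : Bornology.IsBounded {z : Pt | ∀ j, dotp (A j) z ≤ β j}
  int_ne : (interior {z : Pt | ∀ j, dotp (A j) z ≤ β j}).Nonempty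
  edges : ∀ j, ∃ u v : Pt, u ≠ v ∧ (∀ k, dotp (A k) u ≤ β k) ∧ (∀ k, dotp (A k) v ≤ β k) ∧
    dotp (A j) u = β j ∧ dotp (A j) v = β j

/-- The set of points of the board. -/
def Board.set (Bd : Board) : Set Pt := {z | ∀ j, dotp (Bd.A j) z ≤ Bd.β j}

/-- The corners of the board: its extreme points. -/
def Board.corners (Bd : Board) : Set Pt := Set.extremePoints ℝ Bd.set

/-- A two-move rider: two nonparallel basic moves `(c r, d r)`, each with coprime entries. -/
structure Piece where
  c : Bool → ℤ
  d : Bool → ℤ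
  coprime : ∀ r, Int.gcd (c r) (d r) = 1
  nonparallel : c false * d true - c true * d false ≠ 0

/-- The basic move vector of `P` of type `r`, as a vector in `ℝ²`. -/
def Piece.mv (P : Piece) (r : Bool) : Pt := ((P.c r : ℝ), (P.d r : ℝ))

/-- The normal vector `(d_r, -c_r)` of the attack equations of type `r`. -/
def Piece.anorm (P : Piece) (r : Bool) : Pt := ((P.d r : ℝ), -(P.c r : ℝ))

/-- A configuration of `q` points in the plane; the configuration space is `ℝ^{2q}`. -/
abbrev Conf (q : ℕ) : Type := Fin q → Pt

/-- Dot product on the configuration space `ℝ^{2q}`. -/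
def confDot {q : ℕ} (u w : Conf q) : ℝ := ∑ k, dotp (u k) (w k)

/-- The vector of `ℝ^{2q}` whose `i`-th planar component is `v` and all others `0`. -/
def unitVec {q : ℕ} (i : Fin q) (v : Pt) : Conf q := fun k => if k = i then v else 0

/-- The normal vector in `ℝ^{2q}` of the attack hyperplane `(w_i - w_j) · v = 0`. -/
def attackNormal {q : ℕ} (i j : Fin q) (v : Pt) : Conf q :=
  fun k => if k = i then v else if k = j then -v else 0

/-- The hyperplane arrangement `H(z)` associated to a configuration `z`: each hyperplane
`{w | n · w = β}` is recorded as the pair `(n, β)`.  It consists of the attack hyperplanes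
through `z` and the fixation hyperplanes through `z`. -/
def HArr (Bd : Board) (P : Piece) {q : ℕ} (z : Conf q) : Set (Conf q × ℝ) :=
  {h | (∃ i j : Fin q, ∃ r : Bool, i < j ∧ dotp (z i - z j) (P.anorm r) = 0 ∧
          h = (attackNormal i j (P.anorm r), 0)) ∨
       (∃ i : Fin q, ∃ e : Fin Bd.s, dotp (Bd.A e) (z i) = Bd.β e ∧
          h = (unitVec i (Bd.A e), Bd.β e))}

/-- The rank of a configuration `z`: the dimension of the span of the normal vectors
of the hyperplanes of `H(z)`. -/
def confRank (Bd : Board) (P : Piece) {q : ℕ} (z : Conf q) : ℕ :=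
  Module.finrank ℝ (Submodule.span ℝ (Prod.fst '' HArr Bd P z))

/-- A configuration has full rank when its rank is `2q`. -/
def FullRank (Bd : Board) (P : Piece) {q : ℕ} (z : Conf q) : Prop :=
  confRank Bd P z = 2 * q

/-- `z ∈ B^q`. -/
def InBoard (Bd : Board) {q : ℕ} (z : Conf q) : Prop := ∀ i, z i ∈ Bd.set

/-- A vertex of the inside-out polytope `(B^q, A_P^q)`: a point of `B^q` that is the unique
common point of some subset of its associated hyperplane arrangement. -/
def IsVertex (Bd : Board) (P : Piece) {q : ℕ} (z : Conf q) : Prop :=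
  InBoard Bd z ∧
    ∃ H' ⊆ HArr Bd P z, {w : Conf q | ∀ h ∈ H', confDot h.1 w = h.2} = {z}

/-- The line through `b` in direction `v` meets the interior of `R`. -/
def meetsInterior (R : Set Pt) (v : Pt) (b : Pt) : Prop := ∃ t : ℝ, b + t • v ∈ interior R

/-- `b'` is the antipode of `b` in direction `v`: if the line through `b` with direction `v`
misses the interior of `R` then `b' = b`; otherwise `b'` is the second intersection point of
the line with the boundary of `R`. -/
def AntipRel (R : Set Pt) (v : Pt) (b b' : Pt) : Prop :=
  (¬ meetsInterior R v b → b' = b) ∧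
  (meetsInterior R v b → b' ∈ frontier R ∧ b' ≠ b ∧ ∃ t : ℝ, b' = b + t • v)

/-- `s` is the antipode map of `R` in direction `v`. -/
def IsAntipodeMap (R : Set Pt) (v : Pt) (s : Pt → Pt) : Prop :=
  ∀ b ∈ frontier R, AntipRel R v b (s b)

/-- The move type used at step `i` of an alternating sequence whose step `0` uses type `st`. -/
def altMove (st : Bool) (i : ℕ) : Bool := if i % 2 = 0 then st else !st

/-- A trajectory: a finite sequence `b 0, …, b (l-1)` of distinct boundary points of `R`,
each obtained from the previous by an antipode map, the move types alternating. -/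
def IsTrajectory (R : Set Pt) (mv : Bool → Pt) (l : ℕ) (b : ℕ → Pt) (st : Bool) : Prop :=
  1 ≤ l ∧ (∀ i, i < l → b i ∈ frontier R) ∧
  (∀ i j, i < l → j < l → b i = b j → i = j) ∧
  (∀ i, i + 1 < l → AntipRel R (mv (altMove st i)) (b i) (b (i + 1)))

/-- A cyclical trajectory: additionally the first point is the antipode of the last,
the move type continuing the alternation. -/
def IsCyclical (R : Set Pt) (mv : Bool → Pt) (l : ℕ) (b : ℕ → Pt) (st : Bool) : Prop :=
  IsTrajectory R mv l b st ∧ AntipRel R (mv (altMove st (l - 1))) (b (l - 1)) (b 0)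

/-- The configuration `(b 1, …, b l) ∈ B^l` formed by the points of a trajectory. -/
def trajConf (l : ℕ) (b : ℕ → Pt) : Conf l := fun i => b i

/-- A corner trajectory: a trajectory containing a corner of the board. -/
def IsCornerTraj (Bd : Board) (P : Piece) (l : ℕ) (b : ℕ → Pt) (st : Bool) : Prop :=
  IsTrajectory Bd.set P.mv l b st ∧ ∃ i, i < l ∧ b i ∈ Bd.corners

/-- A rigid cycle: a cyclical trajectory of full rank. -/
def IsRigidCycle (Bd : Board) (P : Piece) (l : ℕ) (b : ℕ → Pt) (st : Bool) : Prop :=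
  IsCyclical Bd.set P.mv l b st ∧ confRank Bd P (trajConf l b) = 2 * l

/-- The trajectory can be extended backwards (the relevant antipode of its first point
is a different point). -/
def CanExtendBack (R : Set Pt) (mv : Bool → Pt) (b : ℕ → Pt) (st : Bool) : Prop :=
  meetsInterior R (mv (altMove st 1)) (b 0)

/-- The trajectory can be extended forwards (the relevant antipode of its last point
is a different point). -/
def CanExtendFwd (R : Set Pt) (mv : Bool → Pt) (l : ℕ) (b : ℕ → Pt) (st : Bool) : Prop :=
  meetsInterior R (mv (altMove st (l - 1))) (b (l - 1))

/-- `a 0, …, a (L-1)` is the augmentation of the trajectory `b 0, …, b (l-1)`: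
the trajectory with the antipode of its first point prepended whenever it differs from the
first point, and the antipode of its last point appended whenever it differs from the
last point. -/
def IsAugmentation (R : Set Pt) (mv : Bool → Pt) (l : ℕ) (b : ℕ → Pt) (st : Bool)
    (L : ℕ) (a : ℕ → Pt) : Prop :=
  ∃ off : ℕ,
    (∀ i, i < l → a (i + off) = b i) ∧
    (CanExtendBack R mv b st → off = 1 ∧ AntipRel R (mv (altMove st 1)) (b 0) (a 0)) ∧
    (¬ CanExtendBack R mv b st → off = 0) ∧
    (CanExtendFwd R mv l b st →
      L = l + off + 1 ∧ AntipRel R (mv (altMove st (l - 1))) (b (l - 1)) (a (l + off))) ∧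
    (¬ CanExtendFwd R mv l b st → L = l + off)

/-- `c` is a crossing point of the two sequences: an interior point of `R` lying on a
segment of each. -/
def CrossingOfSeqs (R : Set Pt) (La : ℕ) (a : ℕ → Pt) (Lb : ℕ) (bb : ℕ → Pt) (c : Pt) : Prop :=
  c ∈ interior R ∧ ∃ i j, i + 1 < La ∧ j + 1 < Lb ∧
    c ∈ segment ℝ (a i) (a (i + 1)) ∧ c ∈ segment ℝ (bb j) (bb (j + 1))

/-- `c` is a self-crossing point of the sequence: an interior point of `R` lying on two
distinct segments of the sequence. -/
def SelfCrossingOfSeq (R : Set Pt) (La : ℕ) (a : ℕ → Pt) (c : Pt) : Prop :=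
  c ∈ interior R ∧ ∃ i j, i ≠ j ∧ i + 1 < La ∧ j + 1 < La ∧
    c ∈ segment ℝ (a i) (a (i + 1)) ∧ c ∈ segment ℝ (a j) (a (j + 1))

/-- `x` is a rational number whose denominator (in lowest terms) divides `D`. -/
def DenDvd (x : ℝ) (D : ℕ) : Prop := ∃ p : ℚ, (p : ℝ) = x ∧ p.den ∣ D

/-- Both coordinates of `z` are rational with denominators dividing `D`. -/
def PtDenDvd (z : Pt) (D : ℕ) : Prop := DenDvd z.1 D ∧ DenDvd z.2 D

/-- `D` is the denominator of the inside-out polytope `(B^q, A_P^q)`: the least common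
multiple of the denominators of the coordinates of all of its vertices. -/
def IsIOPDenom (Bd : Board) (P : Piece) (q : ℕ) (D : ℕ) : Prop :=
  (∀ z : Conf q, IsVertex Bd P z → ∀ i, PtDenDvd (z i) D) ∧
  (∀ D' : ℕ, (∀ z : Conf q, IsVertex Bd P z → ∀ i, PtDenDvd (z i) D') → D ∣ D')

/-- A finite family of finite sequences of points (with starting move types),
to be used as a family of trajectories. -/
structure TrajFamily where
  m : ℕ
  len : ℕ → ℕ
  pts : ℕ → ℕ → Pt
  st : ℕ → Bool

/-- Every member of the family is a trajectory. -/
def TrajFamily.Wf (F : TrajFamily) (R : Set Pt) (mv : Bool → Pt) : Prop :=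
  ∀ k, k < F.m → IsTrajectory R mv (F.len k) (F.pts k) (F.st k)

/-- The members of the family partition the set `S`: their point sets are pairwise disjoint
with union `S`. -/
def TrajFamily.Partitions (F : TrajFamily) (S : Set Pt) : Prop :=
  {p | ∃ k, k < F.m ∧ ∃ i, i < F.len k ∧ F.pts k i = p} = S ∧
  ∀ k k', k < F.m → k' < F.m → k ≠ k' →
    ∀ i i', i < F.len k → i' < F.len k' → F.pts k i ≠ F.pts k' i'

/-- The family is a partition into maximal trajectories: no point of one member is an
antipode of a point of a different member (no edge of the antipode graph joins two
distinct members). -/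
def TrajFamily.Maximal (F : TrajFamily) (R : Set Pt) (mv : Bool → Pt) : Prop :=
  ∀ k k', k < F.m → k' < F.m → k ≠ k' →
    ∀ i i', i < F.len k → i' < F.len k' →
      ∀ r : Bool, ¬ AntipRel R (mv r) (F.pts k i) (F.pts k' i')

/-- The unit square `[0,1]²`. -/
def unitSq : Set Pt := Set.Icc ((0, 0) : Pt) ((1, 1) : Pt)

end

/-! Full rank of `z` means that the normals of `H(z)` span `ℝ^{2n}`. For any `σ : Fin m → Fin n`,
the pushforward `ℝ^{2m} → ℝ^{2n}` along `σ` sends each normal of `H(z ∘ σ)` to `0` or to `±` a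
normal of `H(z)`. Duplicating `z i` is precomposition with a surjection, which gives one
direction. For the other, the pushforward along `Fin.castSucc` puts the normals of `H(z)` inside
the span of those of `H(z')`; and since the two copies of `z i` coincide, both attack hyperplanes
between them belong to `H(z')`, whose normals span the plane in the last coordinate. -/

noncomputable section

lemma Submodule.eq_top_of_forall_single_mem {R ι : Type*} [Semiring R] [Fintype ι]
    [DecidableEq ι] {φ : ι → Type*} [∀ i, AddCommMonoid (φ i)] [∀ i, Module R (φ i)]
    {S : Submodule R (∀ i, φ i)} (h : ∀ k v, Pi.single k v ∈ S) : S = ⊤ :=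
  Submodule.eq_top_iff'.2 fun x => Finset.univ_sum_single x ▸ S.sum_mem fun k _ => h k (x k)

lemma Piece.span_anorm (P : Piece) :
    Submodule.span ℝ {P.anorm false, P.anorm true} = ⊤ := by
  have hΔ : (P.c false : ℝ) * P.d true - P.c true * P.d false ≠ 0 := by
    exact_mod_cast P.nonparallel
  set Δ : ℝ := P.c false * P.d true - P.c true * P.d false
  refine Submodule.eq_top_iff'.2 fun p => Submodule.mem_span_pair.2 ?_
  refine ⟨(-P.c true * p.1 - P.d true * p.2) / Δ, (P.c false * p.1 + P.d false * p.2) / Δ, ?_⟩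
  ext <;> simp only [Piece.anorm, Prod.smul_mk, Prod.fst_add, Prod.snd_add, smul_eq_mul] <;>
    field_simp <;> ring

lemma finrank_conf (n : ℕ) : Module.finrank ℝ (Conf n) = 2 * n := by
  simp [Conf, Module.finrank_pi_fintype, Module.finrank_prod, mul_comm]

def normalSpan (Bd : Board) (P : Piece) {n : ℕ} (z : Conf n) : Submodule ℝ (Conf n) :=
  Submodule.span ℝ (Prod.fst '' HArr Bd P z)

section

variable {Bd : Board} {P : Piece} {m n : ℕ}

lemma fullRank_iff_normalSpan_eq_top (z : Conf n) :
    FullRank Bd P z ↔ normalSpan Bd P z = ⊤ := by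
  refine ⟨fun h => Submodule.eq_top_of_finrank_eq ?_, fun h => ?_⟩
  · exact h.trans (finrank_conf n).symm
  · rw [FullRank, confRank, ← normalSpan, h, finrank_top, finrank_conf]

lemma unitVec_eq_single (i : Fin n) (v : Pt) : unitVec i v = Pi.single i v := by
  ext k <;> simp [unitVec, Pi.single_apply]

lemma attackNormal_eq_sub {i j : Fin n} (hij : i ≠ j) (v : Pt) :
    attackNormal i j v = Pi.single i v - Pi.single j v := by
  ext k <;> by_cases hi : k = i <;> by_cases hj : k = j <;>
    simp_all [attackNormal]

lemma unitVec_mem_normalSpan {z : Conf n} {i : Fin n} {e : Fin Bd.s}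
    (he : dotp (Bd.A e) (z i) = Bd.β e) : unitVec i (Bd.A e) ∈ normalSpan Bd P z :=
  Submodule.subset_span ⟨_, Or.inr ⟨i, e, he, rfl⟩, rfl⟩

lemma single_sub_single_mem_normalSpan {z : Conf n} (i j : Fin n) (r : Bool)
    (h : dotp (z i - z j) (P.anorm r) = 0) :
    Pi.single i (P.anorm r) - Pi.single j (P.anorm r) ∈ normalSpan Bd P z := by
  rcases lt_trichotomy i j with hij | rfl | hji
  · rw [← attackNormal_eq_sub hij.ne]
    exact Submodule.subset_span ⟨_, Or.inl ⟨i, j, r, hij, h, rfl⟩, rfl⟩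
  · rw [sub_self]
    exact Submodule.zero_mem _
  · have h' : dotp (z j - z i) (P.anorm r) = 0 := by
      simp only [dotp, Prod.fst_sub, Prod.snd_sub] at h ⊢
      linarith
    rw [← neg_sub, ← attackNormal_eq_sub hji.ne]
    exact neg_mem (Submodule.subset_span ⟨_, Or.inl ⟨j, i, r, hji, h', rfl⟩, rfl⟩)

def pushConf (σ : Fin m → Fin n) : Conf m →ₗ[ℝ] Conf n :=
  ∑ i, LinearMap.single ℝ (fun _ => Pt) (σ i) ∘ₗ LinearMap.proj i

lemma pushConf_single (σ : Fin m → Fin n) (i : Fin m) (v : Pt) :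
    pushConf σ (Pi.single i v) = Pi.single (σ i) v := by
  rw [pushConf, LinearMap.sum_apply, Finset.sum_eq_single i]
  · simp
  · intro k _ hk
    simp [Pi.single_eq_of_ne hk]
  · simp

lemma pushConf_surjective {σ : Fin m → Fin n} (hσ : Function.Surjective σ) :
    Function.Surjective (pushConf σ) := by
  rw [← LinearMap.range_eq_top]
  refine Submodule.eq_top_of_forall_single_mem fun k v => ?_
  obtain ⟨i, rfl⟩ := hσ k
  exact ⟨Pi.single i v, pushConf_single σ i v⟩

lemma map_pushConf_normalSpan_le (σ : Fin m → Fin n) (z : Conf n) :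
    (normalSpan Bd P (z ∘ σ)).map (pushConf σ) ≤ normalSpan Bd P z := by
  rw [normalSpan, Submodule.map_span_le]
  rintro _ ⟨_, ⟨i, j, r, hij, h, rfl⟩ | ⟨i, e, he, rfl⟩, rfl⟩
  · rw [attackNormal_eq_sub hij.ne, map_sub, pushConf_single, pushConf_single]
    exact single_sub_single_mem_normalSpan (σ i) (σ j) r h
  · rw [unitVec_eq_single, pushConf_single, ← unitVec_eq_single]
    exact unitVec_mem_normalSpan he

lemma normalSpan_eq_top_of_comp {σ : Fin m → Fin n} (hσ : Function.Surjective σ) {z : Conf n}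
    (h : normalSpan Bd P (z ∘ σ) = ⊤) : normalSpan Bd P z = ⊤ := by
  rw [← top_le_iff, ← LinearMap.range_eq_top.2 (pushConf_surjective hσ),
    LinearMap.range_eq_map, ← h]
  exact map_pushConf_normalSpan_le σ z

lemma normalSpan_eq_top_of_snoc_self {z : Conf n} (i : Fin n)
    (h : normalSpan Bd P (Fin.snoc z (z i) : Conf (n + 1)) = ⊤) : normalSpan Bd P z = ⊤ := by
  refine normalSpan_eq_top_of_comp (σ := Fin.snoc id i) (fun j => ⟨j.castSucc, by simp⟩) ?_
  rwa [Fin.comp_snoc]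

lemma normalSpan_snoc_self_eq_top {z : Conf n} (i : Fin n) (h : normalSpan Bd P z = ⊤) :
    normalSpan Bd P (Fin.snoc z (z i) : Conf (n + 1)) = ⊤ := by
  set z' : Conf (n + 1) := Fin.snoc z (z i)
  have hcast : ∀ (j : Fin n) v, Pi.single j.castSucc v ∈ normalSpan Bd P z' := by
    intro j v
    rw [← pushConf_single]
    apply map_pushConf_normalSpan_le Fin.castSucc z'
    rw [Fin.snoc_comp_castSucc, h]
    exact Submodule.mem_map_of_mem Submodule.mem_top
  have hpair : ∀ v, Pi.single i.castSucc v - Pi.single (Fin.last n) v ∈ normalSpan Bd P z' := by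
    have hspan : Submodule.span ℝ {P.anorm false, P.anorm true} ≤
        (normalSpan Bd P z').comap (LinearMap.single ℝ (fun _ => Pt) i.castSucc -
          LinearMap.single ℝ (fun _ => Pt) (Fin.last n)) := by
      refine Submodule.span_le.2 ?_
      rintro _ (rfl | rfl) <;>
        exact single_sub_single_mem_normalSpan _ _ _ (by simp [z', dotp])
    rw [P.span_anorm, top_le_iff] at hspan
    exact fun v => (Submodule.eq_top_iff'.1 hspan v :)
  refine Submodule.eq_top_of_forall_single_mem fun k v => ?_
  induction k using Fin.lastCases with
  | last => simpa using Submodule.sub_mem _ (hcast i v) (hpair v)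
  | cast j => exact hcast j v

end

theorem fullRank_iff_fullRank_snoc_general (Bd : Board) (P : Piece) (q : ℕ)
    (z : Conf (q + 1)) :
    FullRank Bd P z ↔ FullRank Bd P (Fin.snoc z (z (Fin.last q))) := by
  rw [fullRank_iff_normalSpan_eq_top, fullRank_iff_normalSpan_eq_top]
  exact ⟨normalSpan_snoc_self_eq_top _, normalSpan_eq_top_of_snoc_self _⟩

/-- Duplicating the last point of a configuration preserves full rank. -/
theorem fullRank_iff_fullRank_snoc (Bd : Board) (P : Piece) (q : ℕ)
    (z : Conf (q + 1)) (hz : InBoard Bd z) :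
    FullRank Bd P z ↔ FullRank Bd P (Fin.snoc z (z (Fin.last q))) :=
  fullRank_iff_fullRank_snoc_general Bd P q z

end
end

section
/- Let B be a board (rational convex polygon) and ℙ a piece with two basic moves. The only trajectories of full rank are corner trajectories and rigid cycles: if a trajectory T = [b₁,…,b_l] has full rank (the point (b₁,…,b_l) ∈ B^l has rank 2l), then T contains a corner of B or T is a cyclical trajectory (hence a rigid cycle). -/
noncomputable section
namespace FRT

/-- Rotation by 90 degrees. -/
def rot (a : Pt) : Pt := (-a.2, a.1)

lemma dotp_comm (u v : Pt) : dotp u v = dotp v u := by simp [dotp]; ring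

lemma dotp_rot_self (a : Pt) : dotp a (rot a) = 0 := by simp [dotp, rot]; ring

lemma rot_ne_zero {a : Pt} (ha : a ≠ 0) : rot a ≠ 0 := by
  simp only [rot, Prod.ext_iff, ne_eq, Prod.fst_zero, Prod.snd_zero, neg_eq_zero] at *
  tauto

lemma dotp_pos {v : Pt} (hv : v ≠ 0) : 0 < dotp v v := by
  have : v.1 ≠ 0 ∨ v.2 ≠ 0 := by
    by_contra h; push_neg at h; exact hv (Prod.ext h.1 h.2)
  rcases this with h | h <;>
    · simp only [dotp]
      nlinarith [mul_self_pos.mpr h, mul_self_nonneg v.1, mul_self_nonneg v.2]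

lemma dotp_nonneg (v : Pt) : 0 ≤ dotp v v := by simp only [dotp]; nlinarith

/-- A vector orthogonal to a nonzero vector is a multiple of its rotation. -/
lemma eq_smul_rot {a v : Pt} (ha : a ≠ 0) (hv : dotp a v = 0) :
    v = ((a.1 * v.2 - a.2 * v.1) / (a.1 ^ 2 + a.2 ^ 2)) • rot a := by
  have hN : a.1 ^ 2 + a.2 ^ 2 ≠ 0 := by
    have : a.1 ≠ 0 ∨ a.2 ≠ 0 := by
      by_contra h; push_neg at h; exact ha (Prod.ext h.1 h.2)
    rcases this with h | h <;> positivity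
  simp only [dotp] at hv
  have h1 : v.1 = (a.1 * v.2 - a.2 * v.1) / (a.1 ^ 2 + a.2 ^ 2) * (-a.2) := by
    field_simp; linear_combination a.1 * hv
  have h2 : v.2 = (a.1 * v.2 - a.2 * v.1) / (a.1 ^ 2 + a.2 ^ 2) * a.1 := by
    field_simp; linear_combination a.2 * hv
  ext
  · simpa [rot] using h1
  · simpa [rot] using h2

/-- Two vectors orthogonal to the same nonzero vector are parallel. -/
lemma parallel_of_dotp_zero {a v w : Pt} (ha : a ≠ 0) (hv : v ≠ 0)
    (h1 : dotp a v = 0) (h2 : dotp a w = 0) : ∃ t : ℝ, w = t • v := by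
  obtain hv' := eq_smul_rot ha h1
  obtain hw' := eq_smul_rot ha h2
  set cv := (a.1 * v.2 - a.2 * v.1) / (a.1 ^ 2 + a.2 ^ 2) with hcv
  set cw := (a.1 * w.2 - a.2 * w.1) / (a.1 ^ 2 + a.2 ^ 2) with hcw
  have hcvne : cv ≠ 0 := by
    intro h; rw [h, zero_smul] at hv'; exact hv hv'
  refine ⟨cw / cv, ?_⟩
  rw [hw', hv', smul_smul]
  congr 1
  field_simp

end FRT
end
noncomputable section
namespace FRT

lemma dotp_cont (a : Pt) : Continuous (fun z : Pt => dotp a z) := by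
  unfold dotp; fun_prop

lemma board_closed (Bd : Board) : IsClosed Bd.set := by
  have : Bd.set = ⋂ j, {z : Pt | dotp (Bd.A j) z ≤ Bd.β j} := by
    ext z; simp [Board.set, Set.mem_iInter]
  rw [this]
  exact isClosed_iInter fun j => isClosed_le (dotp_cont _) continuous_const

lemma dotp_add_right (a u v : Pt) : dotp a (u + v) = dotp a u + dotp a v := by
  simp [dotp]; ring

lemma dotp_smul_right (a : Pt) (t : ℝ) (v : Pt) : dotp a (t • v) = t * dotp a v := by
  simp [dotp]; ring

lemma dotp_sub_right (a u v : Pt) : dotp a (u - v) = dotp a u - dotp a v := by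
  simp [dotp]; ring

lemma board_convex (Bd : Board) : Convex ℝ Bd.set := by
  intro x hx y hy s t hs ht hst j
  have h1 := hx j; have h2 := hy j
  have h3 : dotp (Bd.A j) (s • x + t • y) = s * dotp (Bd.A j) x + t * dotp (Bd.A j) y := by
    rw [dotp_add_right, dotp_smul_right, dotp_smul_right]
  have h4 : s * Bd.β j + t * Bd.β j = Bd.β j := by rw [← add_mul, hst, one_mul]
  nlinarith [mul_le_mul_of_nonneg_left h1 hs, mul_le_mul_of_nonneg_left h2 ht]

lemma frontier_subset_board (Bd : Board) : frontier Bd.set ⊆ Bd.set :=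
  (board_closed Bd).frontier_subset

/-- From an interior point one can move a bit in any direction staying in the set. -/
lemma exists_shift {Bd : Board} {z : Pt} (hz : z ∈ interior Bd.set) (w : Pt) :
    ∃ δ : ℝ, 0 < δ ∧ z + δ • w ∈ Bd.set := by
  have hc : Continuous (fun t : ℝ => z + t • w) := by fun_prop
  have h0 : (fun t : ℝ => z + t • w) 0 ∈ interior Bd.set := by simpa using hz
  have : (fun t : ℝ => z + t • w) ⁻¹' interior Bd.set ∈ nhds (0 : ℝ) :=
    hc.continuousAt.preimage_mem_nhds (isOpen_interior.mem_nhds h0)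
  obtain ⟨δ, hδ, hball⟩ := Metric.mem_nhds_iff.1 this
  refine ⟨δ / 2, by positivity, ?_⟩
  have : (δ / 2 : ℝ) ∈ Metric.ball (0 : ℝ) δ := by
    simp only [Metric.mem_ball, Real.dist_eq, sub_zero]
    rw [abs_of_pos (by positivity)]
    linarith
  exact interior_subset (hball this)

/-- Interior points satisfy nontrivial constraints strictly. -/
lemma interior_strict {Bd : Board} {z : Pt} (hz : z ∈ interior Bd.set)
    {e : Fin Bd.s} (he : Bd.A e ≠ 0) : dotp (Bd.A e) z < Bd.β e := by
  obtain ⟨δ, hδ, hmem⟩ := exists_shift hz (Bd.A e)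
  have h1 : dotp (Bd.A e) (z + δ • Bd.A e) ≤ Bd.β e := hmem e
  rw [dotp_add_right, dotp_smul_right] at h1
  have h2 : 0 < dotp (Bd.A e) (Bd.A e) := dotp_pos he
  nlinarith

/-- Every frontier point has a tight constraint with nonzero normal. -/
lemma exists_tight_nonzero {Bd : Board} {z : Pt} (hz : z ∈ frontier Bd.set) :
    ∃ e : Fin Bd.s, dotp (Bd.A e) z = Bd.β e ∧ Bd.A e ≠ 0 := by
  by_contra h
  push_neg at h
  have hzB : z ∈ Bd.set := frontier_subset_board Bd hz
  have hstrict : ∀ e : Fin Bd.s, Bd.A e ≠ 0 → dotp (Bd.A e) z < Bd.β e := by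
    intro e he
    exact lt_of_le_of_ne (hzB e) (fun hh => he (h e hh))
  set U : Set Pt := ⋂ e : Fin Bd.s, (if h : Bd.A e ≠ 0 then {w : Pt | dotp (Bd.A e) w < Bd.β e} else Set.univ) with hU
  have hUopen : IsOpen U := by
    apply isOpen_iInter_of_finite
    intro e
    split_ifs with he
    · exact isOpen_lt (dotp_cont _) continuous_const
    · exact isOpen_univ
  have hzU : z ∈ U := by
    apply Set.mem_iInter.2
    intro e
    split_ifs with he
    · exact hstrict e he
    · trivial
  have hUR : U ⊆ Bd.set := by
    intro w hw e
    have hw' := Set.mem_iInter.1 hw e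
    by_cases he : Bd.A e ≠ 0
    · rw [dif_pos he] at hw'
      exact le_of_lt hw'
    · push_neg at he
      have h0 : dotp (Bd.A e) z = 0 := by simp [he, dotp]
      have hβ : 0 ≤ Bd.β e := by linarith [hzB e]
      calc dotp (Bd.A e) w = 0 := by simp [he, dotp]
        _ ≤ Bd.β e := hβ
  have : z ∈ interior Bd.set := (hUopen.subset_interior_iff.2 hUR) hzU
  exact hz.2 this

/-- Convex combination attaining the max forces equality. -/
lemma combo_eq {p q β s t : ℝ} (hp : p ≤ β) (hq : q ≤ β) (hs : 0 < s) (ht : 0 < t)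
    (hst : s + t = 1) (h : s * p + t * q = β) : p = β ∧ q = β := by
  have hps : 0 ≤ s * (β - p) := mul_nonneg hs.le (by linarith)
  have hqt : 0 ≤ t * (β - q) := mul_nonneg ht.le (by linarith)
  have hsum : s * (β - p) + t * (β - q) = 0 := by linear_combination β * hst - h
  have h1 : s * (β - p) = 0 := by linarith
  have h2 : t * (β - q) = 0 := by linarith
  constructor
  · rcases mul_eq_zero.1 h1 with h' | h'
    · exact absurd h' (ne_of_gt hs)
    · linarith
  · rcases mul_eq_zero.1 h2 with h' | h'
    · exact absurd h' (ne_of_gt ht)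
    · linarith

/-- At a non-corner boundary point, any two tight constraints have parallel normals. -/
lemma tight_det_zero {Bd : Board} {z : Pt} (hzB : z ∈ Bd.set)
    (hznc : z ∉ Bd.corners) {e f : Fin Bd.s} (hte : dotp (Bd.A e) z = Bd.β e)
    (hene : Bd.A e ≠ 0) (htf : dotp (Bd.A f) z = Bd.β f) :
    dotp (Bd.A f) (rot (Bd.A e)) = 0 := by
  by_contra hdet
  apply hznc
  rw [Board.corners, mem_extremePoints]
  refine ⟨hzB, ?_⟩
  intro x₁ hx₁ x₂ hx₂ hseg
  obtain ⟨s, t, hs, ht, hst, hcombo⟩ := hseg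
  have hde : dotp (Bd.A e) x₁ = Bd.β e ∧ dotp (Bd.A e) x₂ = Bd.β e := by
    apply combo_eq (hx₁ e) (hx₂ e) hs ht hst
    rw [← dotp_smul_right, ← dotp_smul_right, ← dotp_add_right, hcombo]
    exact hte
  have hdf : dotp (Bd.A f) x₁ = Bd.β f ∧ dotp (Bd.A f) x₂ = Bd.β f := by
    apply combo_eq (hx₁ f) (hx₂ f) hs ht hst
    rw [← dotp_smul_right, ← dotp_smul_right, ← dotp_add_right, hcombo]
    exact htf
  have hd1 : dotp (Bd.A e) (x₁ - x₂) = 0 := by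
    rw [dotp_sub_right, hde.1, hde.2, sub_self]
  have hd2 : dotp (Bd.A f) (x₁ - x₂) = 0 := by
    rw [dotp_sub_right, hdf.1, hdf.2, sub_self]
  have hx12 : x₁ = x₂ := by
    have := eq_smul_rot hene hd1
    rw [this] at hd2
    rw [dotp_smul_right] at hd2
    rcases mul_eq_zero.1 hd2 with h | h
    · have h0 : x₁ - x₂ = 0 := by rw [this, h, zero_smul]
      exact sub_eq_zero.1 h0
    · exact absurd h hdet
  have : x₁ = z := by
    rw [← hcombo, hx12, ← add_smul, hst, one_smul]
  exact ⟨this, hx12 ▸ this⟩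

end FRT
end
noncomputable section
namespace FRT

lemma combo_line (x v : Pt) (a bb t₁ t₂ : ℝ) (hab : a + bb = 1) :
    a • (x + t₁ • v) + bb • (x + t₂ • v) = x + (a * t₁ + bb * t₂) • v := by
  have h : a • (x + t₁ • v) + bb • (x + t₂ • v)
      = (a + bb) • x + (a * t₁ + bb * t₂) • v := by module
  rw [h, hab, one_smul]

/-- If the line through `x` in direction `v` misses the interior and `x` is an endpoint of
the line's intersection with the board, then `x` is a corner. -/
lemma endpoint_extreme (Bd : Board) {x v : Pt} (hv : v ≠ 0) (hx : x ∈ Bd.set)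
    (hmiss : ∀ t : ℝ, x + t • v ∉ interior Bd.set)
    (hone : ∀ t : ℝ, x + t • v ∈ Bd.set → 0 ≤ t) :
    x ∈ Bd.corners := by
  set L : Set Pt := Set.range (fun t : ℝ => x + t • v) with hL
  have hLconv : Convex ℝ L := by
    intro p hp q hq a bb ha hb hab
    obtain ⟨t₁, rfl⟩ := hp
    obtain ⟨t₂, rfl⟩ := hq
    exact ⟨a * t₁ + bb * t₂, (combo_line x v a bb t₁ t₂ hab).symm⟩
  have hdisj : Disjoint (interior Bd.set) L := by
    rw [Set.disjoint_left]
    rintro p hp ⟨t, rfl⟩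
    exact hmiss t hp
  obtain ⟨f, u, hfu, hLu⟩ :=
    geometric_hahn_banach_open ((board_convex Bd).interior) isOpen_interior hLconv hdisj
  have hfx : u ≤ f x := hLu x ⟨0, by simp⟩
  have hfv : f v = 0 := by
    by_contra h
    have h1 := hLu (x + ((u - 1 - f x) / f v) • v) ⟨_, rfl⟩
    rw [map_add, map_smul, smul_eq_mul] at h1
    rw [div_mul_cancel₀ _ h] at h1
    linarith
  obtain ⟨c, hc⟩ := Bd.int_ne
  have hfc : f c < u := hfu c hc
  have hRle : ∀ y ∈ Bd.set, f y ≤ u := by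
    intro y hy
    by_contra hgt
    push_neg at hgt
    have hyc : 0 < f y - f c := by linarith
    set θ : ℝ := (f y - u) / (2 * (f y - f c)) with hθ
    have hθpos : 0 < θ := by apply div_pos <;> linarith
    have hθle : θ ≤ 1 := by
      rw [hθ, div_le_one (by linarith)]
      linarith
    have hmem : θ • c + (1 - θ) • y ∈ interior Bd.set :=
      (board_convex Bd).combo_interior_closure_mem_interior hc (subset_closure hy)
        hθpos (by linarith) (by ring)
    have h2 := hfu _ hmem
    rw [map_add, map_smul, map_smul, smul_eq_mul, smul_eq_mul] at h2
    have h3 : θ * (f y - f c) = (f y - u) / 2 := by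
      rw [hθ]; field_simp
    nlinarith
  set p : Pt := (f ((1 : ℝ), (0 : ℝ)), f ((0 : ℝ), (1 : ℝ))) with hp
  have hfp : ∀ w : Pt, f w = dotp p w := by
    intro w
    have hw : w = w.1 • ((1 : ℝ), (0 : ℝ)) + w.2 • ((0 : ℝ), (1 : ℝ)) := by
      ext <;> simp
    calc f w = f (w.1 • ((1 : ℝ), (0 : ℝ)) + w.2 • ((0 : ℝ), (1 : ℝ))) := by rw [← hw]
      _ = w.1 * f ((1 : ℝ), (0 : ℝ)) + w.2 * f ((0 : ℝ), (1 : ℝ)) := by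
          rw [map_add, map_smul, map_smul, smul_eq_mul, smul_eq_mul]
      _ = dotp p w := by simp [dotp, hp]; ring
  have hpne : p ≠ 0 := by
    intro h0
    have : f x = 0 := by rw [hfp, h0]; simp [dotp]
    have : f c = 0 := by rw [hfp, h0]; simp [dotp]
    linarith [hfx, hfc, ‹f x = 0›]
  have hpv : dotp p v = 0 := by rw [← hfp]; exact hfv
  rw [Board.corners, mem_extremePoints]
  refine ⟨hx, ?_⟩
  rintro x₁ hx₁ x₂ hx₂ ⟨a, bb, ha, hb, hab, hcombo⟩
  have hfx_eq : f x = u := le_antisymm (hRle x hx) hfx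
  have hfcombo : a * f x₁ + bb * f x₂ = u := by
    rw [← smul_eq_mul, ← smul_eq_mul, ← map_smul, ← map_smul, ← map_add, hcombo, hfx_eq]
  obtain ⟨he₁, he₂⟩ := combo_eq (hRle x₁ hx₁) (hRle x₂ hx₂) ha hb hab hfcombo
  have hd₁ : dotp p (x₁ - x) = 0 := by
    rw [dotp_sub_right, ← hfp, ← hfp, he₁, hfx_eq, sub_self]
  have hd₂ : dotp p (x₂ - x) = 0 := by
    rw [dotp_sub_right, ← hfp, ← hfp, he₂, hfx_eq, sub_self]
  obtain ⟨t₁, ht₁⟩ := parallel_of_dotp_zero hpne hv hpv hd₁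
  obtain ⟨t₂, ht₂⟩ := parallel_of_dotp_zero hpne hv hpv hd₂
  have hx₁' : x₁ = x + t₁ • v := by rw [← ht₁]; abel
  have hx₂' : x₂ = x + t₂ • v := by rw [← ht₂]; abel
  have ht₁0 : 0 ≤ t₁ := hone t₁ (hx₁' ▸ hx₁)
  have ht₂0 : 0 ≤ t₂ := hone t₂ (hx₂' ▸ hx₂)
  have hsum : (a * t₁ + bb * t₂) • v = 0 := by
    have : x + (a * t₁ + bb * t₂) • v = x + (0 : ℝ) • v := by
      rw [← combo_line x v a bb t₁ t₂ hab, ← hx₁', ← hx₂', hcombo, zero_smul, add_zero]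
    have h' := add_left_cancel this
    rw [h', zero_smul]
  have hab0 : a * t₁ + bb * t₂ = 0 := by
    rcases smul_eq_zero.1 hsum with h | h
    · exact h
    · exact absurd h hv
  have ht₁z : t₁ = 0 := by nlinarith [mul_nonneg ha.le ht₁0, mul_nonneg hb.le ht₂0]
  have ht₂z : t₂ = 0 := by nlinarith [mul_nonneg ha.le ht₁0, mul_nonneg hb.le ht₂0]
  constructor
  · rw [hx₁', ht₁z, zero_smul, add_zero]
  · rw [hx₂', ht₂z, zero_smul, add_zero]

/-- If the line through a non-corner board point misses the interior, every tight constraint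
is orthogonal to the direction of the line. -/
lemma tight_perp_of_miss (Bd : Board) {x v : Pt} (hv : v ≠ 0) (hx : x ∈ Bd.set)
    (hnc : x ∉ Bd.corners) (hmiss : ∀ t : ℝ, x + t • v ∉ interior Bd.set) :
    ∀ e, dotp (Bd.A e) x = Bd.β e → dotp (Bd.A e) v = 0 := by
  have h1 : ¬ ∀ t : ℝ, x + t • v ∈ Bd.set → 0 ≤ t :=
    fun h => hnc (endpoint_extreme Bd hv hx hmiss h)
  push_neg at h1
  obtain ⟨t₁, ht₁R, ht₁neg⟩ := h1
  have hmiss' : ∀ t : ℝ, x + t • (-v) ∉ interior Bd.set := by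
    intro t
    rw [smul_neg, ← neg_smul]
    exact hmiss (-t)
  have h2 : ¬ ∀ t : ℝ, x + t • (-v) ∈ Bd.set → 0 ≤ t :=
    fun h => hnc (endpoint_extreme Bd (neg_ne_zero.2 hv) hx hmiss' h)
  push_neg at h2
  obtain ⟨t₂, ht₂R, ht₂neg⟩ := h2
  rw [smul_neg, ← neg_smul] at ht₂R
  intro e he
  have hA := ht₁R e
  have hB := ht₂R e
  rw [dotp_add_right, dotp_smul_right, he] at hA hB
  nlinarith

lemma mv_ne_zero (P : Piece) (r : Bool) : P.mv r ≠ 0 := by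
  intro h
  have hc : (P.c r : ℝ) = 0 ∧ (P.d r : ℝ) = 0 := by
    constructor
    · exact congrArg Prod.fst h
    · exact congrArg Prod.snd h
  have h1 : P.c r = 0 := by exact_mod_cast hc.1
  have h2 : P.d r = 0 := by exact_mod_cast hc.2
  have := P.coprime r
  rw [h1, h2] at this
  simp [Int.gcd] at this

lemma anorm_ne_zero (P : Piece) (r : Bool) : P.anorm r ≠ 0 := by
  intro h
  have hd : (P.d r : ℝ) = 0 := congrArg Prod.fst h
  have hc : -(P.c r : ℝ) = 0 := congrArg Prod.snd h
  apply mv_ne_zero P r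
  ext
  · simpa [Piece.mv] using (by linarith : (P.c r : ℝ) = 0)
  · simpa [Piece.mv] using hd

lemma rot_anorm (P : Piece) (r : Bool) : rot (P.anorm r) = P.mv r := by
  simp [rot, Piece.anorm, Piece.mv]

lemma dotp_anorm_mv (P : Piece) (r : Bool) : dotp (P.anorm r) (P.mv r) = 0 := by
  simp [dotp, Piece.anorm, Piece.mv]; ring

lemma dotp_anorm_rot (P : Piece) (r : Bool) (a : Pt) :
    dotp (P.anorm r) (rot a) = -(dotp a (P.mv r)) := by
  simp [dotp, Piece.anorm, Piece.mv, rot]; ring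

lemma exists_t_of_aligned (P : Piece) {r : Bool} {w : Pt}
    (h : dotp w (P.anorm r) = 0) : ∃ t : ℝ, w = t • P.mv r := by
  have h' : dotp (P.anorm r) w = 0 := by rw [dotp_comm]; exact h
  have := eq_smul_rot (anorm_ne_zero P r) h'
  rw [rot_anorm] at this
  exact ⟨_, this⟩

lemma altMove_succ (st : Bool) (i : ℕ) : altMove st (i + 1) = !(altMove st i) := by
  unfold altMove
  rcases Nat.mod_two_eq_zero_or_one i with h | h <;> simp [Nat.add_mod, h]

end FRT
end
noncomputable section
namespace FRT

/-- On a line through the board meeting its interior, there are at most two frontier points: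
any three coincide pairwise somewhere. -/
lemma three_collinear_frontier (Bd : Board) {v : Pt} (hv : v ≠ 0) {b0 : Pt}
    (hb0 : b0 ∈ Bd.set) {tc : ℝ} (hc : b0 + tc • v ∈ interior Bd.set) {x y w : Pt}
    (hx : x ∈ frontier Bd.set) (hy : y ∈ frontier Bd.set) (hw : w ∈ frontier Bd.set)
    (htx : ∃ t : ℝ, x = b0 + t • v) (hty : ∃ t : ℝ, y = b0 + t • v)
    (htw : ∃ t : ℝ, w = b0 + t • v) :
    x = y ∨ x = w ∨ y = w := by
  set S : Set ℝ := {t | b0 + t • v ∈ Bd.set} with hS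
  have hS0 : (0 : ℝ) ∈ S := by simpa [hS] using hb0
  have hSc : tc ∈ S := by
    simp only [hS, Set.mem_setOf_eq]
    exact interior_subset hc
  have hclosed : IsClosed S := by
    have : S = (fun t : ℝ => b0 + t • v) ⁻¹' Bd.set := rfl
    rw [this]
    exact (board_closed Bd).preimage (by fun_prop)
  obtain ⟨C, hC⟩ := isBounded_iff_forall_norm_le.1 Bd.bounded
  have hvpos : 0 < ‖v‖ := norm_pos_iff.2 hv
  have habs : ∀ t ∈ S, |t| ≤ (C + ‖b0‖) / ‖v‖ := by
    intro t ht
    have h1 : ‖b0 + t • v‖ ≤ C := hC _ ht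
    have h2 : ‖t • v‖ = ‖(b0 + t • v) - b0‖ := by congr 1; abel
    have h3 : ‖(b0 + t • v) - b0‖ ≤ ‖b0 + t • v‖ + ‖b0‖ := norm_sub_le _ _
    have h4 : |t| * ‖v‖ ≤ C + ‖b0‖ := by
      rw [← Real.norm_eq_abs, ← norm_smul]
      linarith
    rw [le_div_iff₀ hvpos]
    exact h4
  have hbb : BddBelow S := ⟨-((C + ‖b0‖) / ‖v‖), fun t ht => by
    have := habs t ht; rw [abs_le] at this; linarith [this.1]⟩
  have hba : BddAbove S := ⟨(C + ‖b0‖) / ‖v‖, fun t ht => by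
    have := habs t ht; rw [abs_le] at this; linarith [this.2]⟩
  set t₁ : ℝ := sInf S with ht₁
  set t₂ : ℝ := sSup S with ht₂
  have hne : S.Nonempty := ⟨0, hS0⟩
  have ht₁S : t₁ ∈ S := hclosed.csInf_mem hne hbb
  have ht₂S : t₂ ∈ S := hclosed.csSup_mem hne hba
  have key : ∀ t, t ∈ S → t₁ < t → t < t₂ → b0 + t • v ∈ interior Bd.set := by
    intro t htS hlt₁ hlt₂
    rcases lt_trichotomy t tc with h | h | h
    · set θ : ℝ := (t - t₁) / (tc - t₁) with hθ
      have htc1 : t₁ < tc := lt_trans hlt₁ h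
      have hd : tc - t₁ ≠ 0 := ne_of_gt (by linarith)
      have hθpos : 0 < θ := div_pos (by linarith) (by linarith)
      have hθle : θ ≤ 1 := by rw [hθ, div_le_one (by linarith)]; linarith
      have hsc : θ * tc + (1 - θ) * t₁ = t := by rw [hθ]; field_simp; ring
      have hcombo : θ • (b0 + tc • v) + (1 - θ) • (b0 + t₁ • v) = b0 + t • v := by
        rw [combo_line _ _ _ _ _ _ (by ring), hsc]
      rw [← hcombo]
      exact (board_convex Bd).combo_interior_closure_mem_interior hc
        (subset_closure ht₁S) hθpos (by linarith) (by ring)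
    · rw [h]; exact hc
    · set θ : ℝ := (t₂ - t) / (t₂ - tc) with hθ
      have htc2 : tc < t₂ := lt_trans h hlt₂
      have hd : t₂ - tc ≠ 0 := ne_of_gt (by linarith)
      have hθpos : 0 < θ := div_pos (by linarith) (by linarith)
      have hθle : θ ≤ 1 := by rw [hθ, div_le_one (by linarith)]; linarith
      have hsc : θ * tc + (1 - θ) * t₂ = t := by rw [hθ]; field_simp; ring
      have hcombo : θ • (b0 + tc • v) + (1 - θ) • (b0 + t₂ • v) = b0 + t • v := by
        rw [combo_line _ _ _ _ _ _ (by ring), hsc]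
      rw [← hcombo]
      exact (board_convex Bd).combo_interior_closure_mem_interior hc
        (subset_closure ht₂S) hθpos (by linarith) (by ring)
  have endpoint : ∀ z : Pt, z ∈ frontier Bd.set → ∀ t : ℝ, z = b0 + t • v →
      t = t₁ ∨ t = t₂ := by
    intro z hz t hzt
    have htS : t ∈ S := by
      have : z ∈ Bd.set := frontier_subset_board Bd hz
      rw [hzt] at this
      exact this
    have h1 : t₁ ≤ t := csInf_le hbb htS
    have h2 : t ≤ t₂ := le_csSup hba htS
    by_contra hcon
    push_neg at hcon
    have : z ∈ interior Bd.set := by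
      rw [hzt]
      exact key t htS (lt_of_le_of_ne h1 (Ne.symm hcon.1)) (lt_of_le_of_ne h2 hcon.2)
    exact hz.2 this
  obtain ⟨tx, hx'⟩ := htx
  obtain ⟨ty, hy'⟩ := hty
  obtain ⟨tw, hw'⟩ := htw
  have ex := endpoint x hx tx hx'
  have ey := endpoint y hy ty hy'
  have ew := endpoint w hw tw hw'
  have htri : tx = ty ∨ tx = tw ∨ ty = tw := by
    rcases ex with h | h <;> rcases ey with h' | h' <;> rcases ew with h'' | h'' <;>
      simp [h, h', h'']
  rcases htri with h | h | h
  · left; rw [hx', hy', h]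
  · right; left; rw [hx', hw', h]
  · right; right; rw [hy', hw', h]

end FRT
end
noncomputable section
namespace FRT

/-- Recursive construction of the sliding vector. -/
def Wrec (u an : ℕ → Pt) : ℕ → Pt
  | 0 => u 0
  | (i + 1) => ((dotp (Wrec u an i) (an i)) / dotp (u (i + 1)) (an i)) • u (i + 1)

lemma antip_extract {R : Set Pt} {v x y : Pt} (h : AntipRel R v x y) (hne : y ≠ x) :
    meetsInterior R v x ∧ y ∈ frontier R ∧ ∃ t : ℝ, y = x + t • v := by
  by_cases hm : meetsInterior R v x
  · obtain ⟨h1, _, h3⟩ := h.2 hm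
    exact ⟨hm, h1, h3⟩
  · exact absurd (h.1 hm) hne

lemma meets_translate {R : Set Pt} {v x y : Pt} (h : meetsInterior R v x) (t₀ : ℝ)
    (hy : y = x + t₀ • v) : meetsInterior R v y := by
  obtain ⟨t, ht⟩ := h
  refine ⟨t - t₀, ?_⟩
  have : y + (t - t₀) • v = x + t • v := by rw [hy]; module
  rw [this]
  exact ht

lemma confDot_attack {q : ℕ} (i j : Fin q) (hij : i ≠ j) (a : Pt) (W : Conf q) :
    confDot (attackNormal i j a) W = dotp a (W i) - dotp a (W j) := by
  unfold confDot attackNormal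
  have hterm : ∀ k : Fin q, dotp (if k = i then a else if k = j then -a else 0) (W k)
      = (if k = i then dotp a (W k) else 0) + (if k = j then -(dotp a (W k)) else 0) := by
    intro k
    by_cases h1 : k = i
    · subst h1
      rw [if_pos rfl, if_pos rfl, if_neg hij, add_zero]
    · rw [if_neg h1, if_neg h1, zero_add]
      by_cases h2 : k = j
      · subst h2
        rw [if_pos rfl, if_pos rfl]
        simp [dotp]; ring
      · rw [if_neg h2, if_neg h2]
        simp [dotp]
  rw [Finset.sum_congr rfl (fun k _ => hterm k), Finset.sum_add_distrib,
    Finset.sum_ite_eq' Finset.univ i, Finset.sum_ite_eq' Finset.univ j]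
  simp [sub_eq_add_neg]

lemma confDot_unit {q : ℕ} (i : Fin q) (a : Pt) (W : Conf q) :
    confDot (unitVec i a) W = dotp a (W i) := by
  unfold confDot unitVec
  have hterm : ∀ k : Fin q, dotp (if k = i then a else 0) (W k)
      = (if k = i then dotp a (W k) else 0) := by
    intro k
    by_cases h1 : k = i
    · subst h1; rw [if_pos rfl, if_pos rfl]
    · rw [if_neg h1, if_neg h1]; simp [dotp]
  rw [Finset.sum_congr rfl (fun k _ => hterm k), Finset.sum_ite_eq' Finset.univ i]
  simp

lemma bool_resolve {a r : Bool} (h : ¬(!a) = r) : a = r := by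
  cases a <;> cases r <;> simp_all

lemma bool_resolve2 {a r : Bool} (h : ¬a = r) : (!a) = r := by
  cases a <;> cases r <;> simp_all

end FRT
end
noncomputable section

open FRT

/-- The only trajectories of full rank are corner trajectories and rigid cycles:
a full-rank trajectory contains a corner or is cyclical. -/
theorem fullRank_traj_corner_or_cyclical (Bd : Board) (P : Piece)
    (l : ℕ) (b : ℕ → Pt) (st : Bool)
    (hT : IsTrajectory Bd.set P.mv l b st)
    (hrk : confRank Bd P (trajConf l b) = 2 * l) :
    (∃ i, i < l ∧ b i ∈ Bd.corners) ∨ IsCyclical Bd.set P.mv l b st := by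
  by_contra hcon
  push_neg at hcon
  obtain ⟨hnc, hncyc⟩ := hcon
  obtain ⟨hl, hfr, hinj, hant⟩ := hT
  have hl0 : 0 < l := hl
  -- choose a tight constraint with nonzero normal at each trajectory point
  have hpick : ∀ i : ℕ, ∃ a : Pt, a ≠ 0 ∧
      (i < l → ∃ e : Fin Bd.s, Bd.A e = a ∧ dotp a (b i) = Bd.β e) := by
    intro i
    by_cases hi : i < l
    · obtain ⟨e, hte, hne⟩ := exists_tight_nonzero (hfr i hi)
      exact ⟨Bd.A e, hne, fun _ => ⟨e, rfl, hte⟩⟩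
    · exact ⟨(1, 0), by simp [Prod.ext_iff], fun h => absurd h hi⟩
  choose aa haa using hpick
  have hune : ∀ i, rot (aa i) ≠ 0 := fun i => rot_ne_zero (haa i).1
  set u : ℕ → Pt := fun i => rot (aa i) with hu
  set Wn : ℕ → Pt := Wrec u (fun i => P.anorm (altMove st i)) with hWn
  have hW0 : Wn 0 = u 0 := rfl
  have hWs : ∀ i, Wn (i + 1) =
      ((dotp (Wn i) (P.anorm (altMove st i))) /
        dotp (u (i + 1)) (P.anorm (altMove st i))) • u (i + 1) := fun i => rfl
  have hWu : ∀ i, ∃ c : ℝ, Wn i = c • u i := by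
    intro i
    cases i with
    | zero => exact ⟨1, (one_smul ℝ _).symm⟩
    | succ n => exact ⟨_, hWs n⟩
  -- fixation orthogonality
  have hPfix : ∀ i, i < l → ∀ f : Fin Bd.s, dotp (Bd.A f) (b i) = Bd.β f →
      dotp (Bd.A f) (Wn i) = 0 := by
    intro i hi f htf
    obtain ⟨c, hc⟩ := hWu i
    obtain ⟨e, hea, hte⟩ := (haa i).2 hi
    have hte' : dotp (Bd.A e) (b i) = Bd.β e := by rw [hea]; exact hte
    have hene : Bd.A e ≠ 0 := by rw [hea]; exact (haa i).1
    have hdet : dotp (Bd.A f) (rot (Bd.A e)) = 0 :=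
      tight_det_zero (frontier_subset_board Bd (hfr i hi)) (hnc i hi) hte' hene htf
    rw [hc, dotp_smul_right]
    have : u i = rot (Bd.A e) := by rw [hu]; simp only; rw [hea]
    rw [this, hdet, mul_zero]
  -- nonvanishing denominators along the trajectory
  have hden : ∀ i, i + 1 < l → dotp (u (i + 1)) (P.anorm (altMove st i)) ≠ 0 := by
    intro i hi1 h0
    have h1 : dotp (aa (i + 1)) (P.mv (altMove st i)) = 0 := by
      have h2 := dotp_anorm_rot P (altMove st i) (aa (i + 1))
      rw [dotp_comm] at h0
      have : u (i + 1) = rot (aa (i + 1)) := rfl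
      rw [this] at h0
      rw [h2] at h0
      linarith
    obtain ⟨e, hea, hte⟩ := (haa (i + 1)).2 hi1
    have hanti := hant i hi1
    have hbne : b (i + 1) ≠ b i := fun h => by
      have := hinj _ _ hi1 (by omega) h; omega
    obtain ⟨hm, hfr', t1, ht1⟩ := antip_extract hanti hbne
    obtain ⟨t0, ht0⟩ := hm
    have hene : Bd.A e ≠ 0 := by rw [hea]; exact (haa (i + 1)).1
    have hw : dotp (Bd.A e) (b i + t0 • P.mv (altMove st i)) < Bd.β e :=
      interior_strict ht0 hene
    have heq : dotp (Bd.A e) (b i + t0 • P.mv (altMove st i)) = Bd.β e := by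
      have hrw : b i + t0 • P.mv (altMove st i)
          = b (i + 1) + (t0 - t1) • P.mv (altMove st i) := by
        rw [ht1]; module
      rw [hrw, dotp_add_right, dotp_smul_right]
      have hA0 : dotp (Bd.A e) (P.mv (altMove st i)) = 0 := by rw [hea]; exact h1
      have hAb : dotp (Bd.A e) (b (i + 1)) = Bd.β e := by rw [hea]; exact hte
      rw [hA0, hAb, mul_zero, add_zero]
    exact absurd heq (ne_of_lt hw)
  -- consecutive attack orthogonality
  have hPcons : ∀ i, i + 1 < l →
      dotp (P.anorm (altMove st i)) (Wn (i + 1)) = dotp (P.anorm (altMove st i)) (Wn i) := by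
    intro i hi1
    rw [hWs i, dotp_smul_right, dotp_comm (P.anorm (altMove st i)) (u (i + 1))]
    rw [div_mul_cancel₀ _ (hden i hi1)]
    exact dotp_comm _ _
  -- the full attack orthogonality
  have hPatt : ∀ (i j : ℕ), i < j → j < l → ∀ r : Bool,
      dotp (b i - b j) (P.anorm r) = 0 →
      dotp (P.anorm r) (Wn i) = dotp (P.anorm r) (Wn j) := by
    intro i j hij hjl r halign
    have hil : i < l := lt_trans hij hjl
    have hvne : P.mv r ≠ 0 := mv_ne_zero P r
    have hbne : b i ≠ b j := fun h => by have := hinj i j hil hjl h; omega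
    obtain ⟨tij, htij⟩ : ∃ t : ℝ, b i = b j + t • P.mv r := by
      obtain ⟨t, ht⟩ := exists_t_of_aligned P halign
      refine ⟨t, ?_⟩
      have : b j + (b i - b j) = b j + t • P.mv r := by rw [ht]
      rw [← this]; abel
    have htji : b j = b i + (-tij) • P.mv r := by rw [htij]; module
    by_cases hm : meetsInterior Bd.set (P.mv r) (b i)
    · -- Case A : the line meets the interior
      obtain ⟨tc, htc⟩ := hm
      have L : ∀ x : Pt, x ∈ frontier Bd.set → (∃ t : ℝ, x = b i + t • P.mv r) →
          x = b i ∨ x = b j := by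
        intro x hx htx
        have h3 := three_collinear_frontier Bd hvne
          (frontier_subset_board Bd (hfr i hil)) htc hx (hfr i hil) (hfr j hjl) htx
          ⟨0, by simp⟩ ⟨-tij, htji⟩
        rcases h3 with h | h | h
        · exact Or.inl h
        · exact Or.inr h
        · exact absurd h hbne
      by_cases h1 : altMove st i = r
      · -- the forward move out of i has type r
        have hi1 : i + 1 < l := by omega
        have hanti := hant i hi1
        rw [h1] at hanti
        have hne' : b (i + 1) ≠ b i := fun h => by
          have := hinj _ _ hi1 hil h; omega
        obtain ⟨hm', hf', t1, ht1⟩ := antip_extract hanti hne'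
        rcases L (b (i + 1)) hf' ⟨t1, ht1⟩ with h | h
        · exact absurd (hinj _ _ hi1 hil h) (by omega)
        · have hj1 : i + 1 = j := hinj _ _ hi1 hjl h
          have hcc := hPcons i hi1
          rw [h1] at hcc
          rw [← hj1]
          exact hcc.symm
      · by_cases h0 : 0 < i
        · -- the backward move into i has type r : impossible
          have hback : altMove st (i - 1) = r := by
            have hs := altMove_succ st (i - 1)
            rw [show i - 1 + 1 = i from by omega] at hs
            rw [hs] at h1
            exact bool_resolve h1
          have hi1 : i - 1 + 1 < l := by omega
          have hanti := hant (i - 1) hi1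
          rw [show i - 1 + 1 = i from by omega, hback] at hanti
          have hne' : b i ≠ b (i - 1) := fun h => by
            have := hinj _ _ hil (by omega) h; omega
          obtain ⟨hm', hf', t1, ht1⟩ := antip_extract hanti hne'
          have hon : b (i - 1) = b i + (-t1) • P.mv r := by rw [ht1]; module
          rcases L (b (i - 1)) (hfr _ (by omega)) ⟨-t1, hon⟩ with h | h
          · have := hinj _ _ (by omega) hil h; omega
          · have := hinj _ _ (by omega) hjl h; omega
        · -- i = 0 and its move has the other type
          have hi0 : i = 0 := by omega
          by_cases hjb : altMove st (j - 1) = r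
          · -- the backward move into j has type r : forces j - 1 = i, contradiction
            have hanti := hant (j - 1) (by omega)
            rw [show j - 1 + 1 = j from by omega, hjb] at hanti
            have hne' : b j ≠ b (j - 1) := fun h => by
              have := hinj _ _ hjl (by omega) h; omega
            obtain ⟨hm', hf', t1, ht1⟩ := antip_extract hanti hne'
            have hon : b (j - 1) = b i + (-tij - t1) • P.mv r := by
              have h5 : b i = b (j - 1) + t1 • P.mv r + tij • P.mv r := by
                rw [htij, ht1]
              rw [h5]; module
            rcases L (b (j - 1)) (hfr _ (by omega)) ⟨-tij - t1, hon⟩ with h | h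
            · have hj1 : j - 1 = i := hinj _ _ (by omega) hil h
              rw [hj1] at hjb
              exact absurd hjb h1
            · have := hinj _ _ (by omega) hjl h; omega
          · -- the trajectory is cyclical : contradiction
            have hj1 : 0 < j := by omega
            have hτj : altMove st j = r := by
              have hs := altMove_succ st (j - 1)
              rw [show j - 1 + 1 = j from by omega] at hs
              rw [hs]
              exact bool_resolve2 hjb
            by_cases hjf : j + 1 < l
            · have hanti := hant j hjf
              rw [hτj] at hanti
              have hne' : b (j + 1) ≠ b j := fun h => by
                have := hinj _ _ (by omega) hjl h; omega
              obtain ⟨hm', hf', t1, ht1⟩ := antip_extract hanti hne'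
              have hon : b (j + 1) = b i + (t1 - tij) • P.mv r := by
                rw [ht1, htji]; module
              rcases L (b (j + 1)) hf' ⟨t1 - tij, hon⟩ with h | h
              · have := hinj _ _ (by omega) hil h; omega
              · have := hinj _ _ (by omega) hjl h; omega
            · -- j = l - 1 : closing antipode relation exists
              have hjl1 : j = l - 1 := by omega
              have hmj : meetsInterior Bd.set (P.mv r) (b j) :=
                meets_translate ⟨tc, htc⟩ (-tij) htji
              have hcyc : IsCyclical Bd.set P.mv l b st := by
                refine ⟨⟨hl, hfr, hinj, hant⟩, ?_⟩
                rw [show altMove st (l - 1) = r from by rw [← hjl1]; exact hτj]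
                constructor
                · intro hno
                  rw [← hjl1] at hno
                  exact absurd hmj hno
                · intro _
                  refine ⟨hfr 0 (by omega), ?_, ⟨tij, ?_⟩⟩
                  · intro h
                    have := hinj 0 (l - 1) (by omega) (by omega) h
                    omega
                  · rw [← hjl1, ← hi0]
                    exact htij
              exact absurd hcyc hncyc
    · -- Case B : the line misses the interior
      have hmi : ∀ t : ℝ, b i + t • P.mv r ∉ interior Bd.set := by
        intro t ht; exact hm ⟨t, ht⟩
      have hmj : ∀ t : ℝ, b j + t • P.mv r ∉ interior Bd.set := by
        intro t ht
        apply hm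
        refine ⟨-tij + t, ?_⟩
        have h5 : b i + (-tij + t) • P.mv r = b j + t • P.mv r := by rw [htij]; module
        rw [h5]
        exact ht
      have hperp : ∀ k, k < l → (∀ t : ℝ, b k + t • P.mv r ∉ interior Bd.set) →
          dotp (P.anorm r) (Wn k) = 0 := by
        intro k hk hmk
        obtain ⟨c, hc⟩ := hWu k
        obtain ⟨e, hea, hte⟩ := (haa k).2 hk
        have hte' : dotp (Bd.A e) (b k) = Bd.β e := by rw [hea]; exact hte
        have h1 : dotp (Bd.A e) (P.mv r) = 0 :=
          tight_perp_of_miss Bd hvne (frontier_subset_board Bd (hfr k hk))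
            (hnc k hk) hmk e hte'
        have huk : u k = rot (Bd.A e) := by rw [hu]; simp only; rw [hea]
        rw [hc, dotp_smul_right, huk, dotp_anorm_rot, h1, neg_zero, mul_zero]
      rw [hperp i hil hmi, hperp j hjl hmj]
  -- assemble the orthogonal vector and the rank bound
  set Wc : Conf l := fun k => Wn k.val with hWc
  have hφex : ∃ φ : Conf l →ₗ[ℝ] ℝ, ∀ vv : Conf l, φ vv = confDot vv Wc := by
    refine ⟨⟨⟨fun vv => confDot vv Wc, ?_⟩, ?_⟩, fun _ => rfl⟩
    · intro x y
      simp only [confDot]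
      rw [← Finset.sum_add_distrib]
      apply Finset.sum_congr rfl
      intro k _
      simp [dotp, Pi.add_apply, Prod.fst_add, Prod.snd_add]
      ring
    · intro m x
      simp only [confDot, smul_eq_mul, RingHom.id_apply]
      rw [Finset.mul_sum]
      apply Finset.sum_congr rfl
      intro k _
      simp [dotp, Pi.smul_apply, Prod.smul_fst, Prod.smul_snd, smul_eq_mul]
      ring
  obtain ⟨φ, hφ⟩ := hφex
  have hspan : Submodule.span ℝ (Prod.fst '' HArr Bd P (trajConf l b)) ≤ LinearMap.ker φ := by
    rw [Submodule.span_le]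
    rintro n ⟨h, hh, rfl⟩
    rcases hh with ⟨i, j, r, hij, halign, heq⟩ | ⟨i, e, hte, heq⟩
    · rw [heq]
      simp only [SetLike.mem_coe, LinearMap.mem_ker]
      rw [hφ, confDot_attack i j (ne_of_lt hij) _ Wc]
      have hij' : (i : ℕ) < (j : ℕ) := hij
      have halign' : dotp (b i.val - b j.val) (P.anorm r) = 0 := halign
      have := hPatt i.val j.val hij' j.isLt r halign'
      have hWi : Wc i = Wn i.val := rfl
      have hWj : Wc j = Wn j.val := rfl
      rw [hWi, hWj, this, sub_self]
    · rw [heq]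
      simp only [SetLike.mem_coe, LinearMap.mem_ker]
      rw [hφ, confDot_unit i _ Wc]
      have hte' : dotp (Bd.A e) (b i.val) = Bd.β e := hte
      exact hPfix i.val i.isLt e hte'
  have hWcpos : 0 < φ Wc := by
    rw [hφ]
    have hpos : 0 < dotp (Wc ⟨0, hl0⟩) (Wc ⟨0, hl0⟩) := by
      apply dotp_pos
      show Wn 0 ≠ 0
      rw [hW0]
      exact hune 0
    have hsum := Finset.single_le_sum (f := fun k : Fin l => dotp (Wc k) (Wc k))
      (fun k _ => dotp_nonneg _) (Finset.mem_univ ⟨0, hl0⟩)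
    unfold confDot
    linarith
  have hker : LinearMap.ker φ ≠ ⊤ := by
    intro h
    have : φ Wc = 0 := by
      have : Wc ∈ LinearMap.ker φ := by rw [h]; trivial
      exact this
    linarith
  have hfrk : Module.finrank ℝ (Conf l) = 2 * l := by
    rw [Module.finrank_pi_fintype]
    have h2 : Module.finrank ℝ Pt = 2 := by
      rw [Module.finrank_prod, Module.finrank_self]
    simp [h2, Finset.sum_const, Finset.card_univ, mul_comm]
  have hlt : confRank Bd P (trajConf l b) < 2 * l := by
    unfold confRank
    calc Module.finrank ℝ (Submodule.span ℝ (Prod.fst '' HArr Bd P (trajConf l b)))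
        ≤ Module.finrank ℝ (LinearMap.ker φ) := Submodule.finrank_mono hspan
      _ < Module.finrank ℝ (Conf l) := Submodule.finrank_lt hker
      _ = 2 * l := hfrk
  omega

end
end

section
/- Let B be a board (rational convex polygon), ℙ a piece with two basic moves, and S = {z₁,…,z_l} a finite subset of ∂B. Let T(S) be the partition of S into maximal trajectories, namely the partition whose blocks are the connected components of the graph on S with an edge between distinct u, v ∈ S whenever v = s₁u or v = s₂u, each component ordered along its path or cycle as a trajectory. Then the rank of the point (z₁,…,z_l) ∈ B^l equals the sum over the trajectories [b₁,…,b_k] ∈ T(S) of the rank of (b₁,…,b_k) ∈ B^k; in particular, S has full rank (rank 2l) if and only if every trajectory in T(S) has full rank. -/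
noncomputable section
namespace RkAux

lemma dotp_add_smul (a x : Pt) (t : ℝ) (v : Pt) :
    dotp a (x + t • v) = dotp a x + t * dotp a v := by
  simp [dotp]; ring

lemma perp_char (a u : Pt) (ha : a ≠ 0) (h : dotp u a = 0) :
    ∃ t : ℝ, u = t • (-a.2, a.1) := by
  by_cases h1 : a.1 = 0
  · have h2 : a.2 ≠ 0 := by
      intro h2; exact ha (Prod.ext h1 h2)
    have hu2 : u.2 = 0 := by
      have : u.2 * a.2 = 0 := by simpa [dotp, h1] using h
      exact (mul_eq_zero.1 this).resolve_right h2
    refine ⟨-u.1 / a.2, ?_⟩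
    have he : ((-u.1 / a.2) • ((-a.2, a.1) : Pt)) = (-u.1 / a.2 * -a.2, -u.1 / a.2 * a.1) := rfl
    rw [he]
    refine Prod.ext ?_ ?_
    · show u.1 = -u.1 / a.2 * -a.2
      field_simp
    · show u.2 = -u.1 / a.2 * a.1
      rw [h1, hu2]; ring
  · refine ⟨u.2 / a.1, ?_⟩
    have h' : u.1 * a.1 + u.2 * a.2 = 0 := h
    have he : ((u.2 / a.1) • ((-a.2, a.1) : Pt)) = (u.2 / a.1 * -a.2, u.2 / a.1 * a.1) := rfl
    rw [he]
    refine Prod.ext ?_ ?_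
    · show u.1 = u.2 / a.1 * -a.2
      field_simp; nlinarith [h']
    · show u.2 = u.2 / a.1 * a.1
      field_simp

/-- Submodule of configurations supported on indices whose block lies in `s`. -/
def supportedOn {l : ℕ} (β : Fin l → ℕ) (s : Set ℕ) : Submodule ℝ (Conf l) where
  carrier := {u | ∀ j, β j ∉ s → u j = 0}
  add_mem' := by
    intro u v hu hv j hj
    simp only [Pi.add_apply, hu j hj, hv j hj, add_zero]
  zero_mem' := fun j _ => rfl
  smul_mem' := by
    intro c u hu j hj
    simp only [Pi.smul_apply, hu j hj, smul_zero]

lemma supportedOn_mono {l : ℕ} (β : Fin l → ℕ) {s t : Set ℕ} (h : s ⊆ t) :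
    supportedOn β s ≤ supportedOn β t :=
  fun u hu j hj => hu j (fun hs => hj (h hs))

lemma supportedOn_disjoint {l : ℕ} (β : Fin l → ℕ) {s t : Set ℕ} (h : Disjoint s t) :
    Disjoint (supportedOn β s) (supportedOn β t) := by
  rw [Submodule.disjoint_def]
  intro u hu hv
  funext j
  by_cases hj : β j ∈ s
  · exact hv j (fun ht => (Set.disjoint_left.1 h) hj ht)
  · exact hu j hj

lemma finrank_sup_range {l : ℕ} (β : Fin l → ℕ) (f : ℕ → Submodule ℝ (Conf l))
    (hf : ∀ k, f k ≤ supportedOn β {k}) (n : ℕ) :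
    Module.finrank ℝ ((Finset.range n).sup f : Submodule ℝ (Conf l)) =
      ∑ k ∈ Finset.range n, Module.finrank ℝ (f k) := by
  induction n with
  | zero => rw [Finset.range_zero, Finset.sup_empty]; simp
  | succ n ih =>
    rw [Finset.range_add_one, Finset.sup_insert, Finset.sum_insert Finset.notMem_range_self]
    have h2 : (Finset.range n).sup f ≤ supportedOn β (Set.Iio n) := by
      apply Finset.sup_le
      intro k hk
      exact (hf k).trans (supportedOn_mono β (by
        intro x hx
        simp only [Set.mem_singleton_iff] at hx
        simp [hx, Finset.mem_range.1 hk]))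
    have hdis : Disjoint (f n) ((Finset.range n).sup f) := by
      refine Disjoint.mono (hf n) h2 (supportedOn_disjoint β ?_)
      simp [Set.disjoint_left]
    have hkey := Submodule.finrank_sup_add_finrank_inf_eq (f n) ((Finset.range n).sup f)
    rw [hdis.eq_bot, finrank_bot] at hkey
    omega

lemma attackNormal_comm {q : ℕ} (i j : Fin q) (hij : i ≠ j) (v : Pt) :
    attackNormal j i v = - attackNormal i j v := by
  funext k
  simp only [attackNormal, Pi.neg_apply]
  by_cases h1 : k = i
  · subst h1
    simp [hij]
  · by_cases h2 : k = j
    · subst h2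
      simp [h1]
    · simp [h1, h2]

lemma mv_ne_zero (P : Piece) (r : Bool) : P.mv r ≠ 0 := by
  intro h
  have h1 : ((P.c r : ℝ)) = 0 := congrArg Prod.fst h
  have h2 : ((P.d r : ℝ)) = 0 := congrArg Prod.snd h
  have hg := P.coprime r
  rw [Int.cast_eq_zero] at h1 h2
  rw [h1, h2] at hg
  simp [Int.gcd] at hg

lemma anorm_ne_zero (P : Piece) (r : Bool) : P.anorm r ≠ 0 := by
  intro h
  have h1 : ((P.d r : ℝ)) = 0 := congrArg Prod.fst h
  have h2 : (-(P.c r : ℝ)) = 0 := congrArg Prod.snd h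
  have hg := P.coprime r
  rw [Int.cast_eq_zero] at h1
  rw [neg_eq_zero, Int.cast_eq_zero] at h2
  rw [h1, h2] at hg
  simp [Int.gcd] at hg

lemma dotp_continuous (a : Pt) : Continuous (fun u : Pt => dotp a u) := by
  unfold dotp
  exact (continuous_const.mul continuous_fst).add (continuous_const.mul continuous_snd)

lemma board_closed (Bd : Board) : IsClosed Bd.set := by
  have h : Bd.set = ⋂ j, {z : Pt | dotp (Bd.A j) z ≤ Bd.β j} := Set.setOf_forall _
  rw [h]
  exact isClosed_iInter fun j => isClosed_le (dotp_continuous _) continuous_const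

lemma board_edge_of_not_interior (Bd : Board) {w : Pt} (hw : w ∈ Bd.set)
    (hni : w ∉ interior Bd.set) : ∃ e, Bd.A e ≠ 0 ∧ dotp (Bd.A e) w = Bd.β e := by
  by_contra hcon
  push_neg at hcon
  apply hni
  have hU : IsOpen {u : Pt | ∀ e, Bd.A e ≠ 0 → dotp (Bd.A e) u < Bd.β e} := by
    rw [Set.setOf_forall]
    refine isOpen_iInter_of_finite fun e => ?_
    by_cases he : Bd.A e = 0
    · simp [he]
    · have hset : {u : Pt | Bd.A e ≠ 0 → dotp (Bd.A e) u < Bd.β e}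
          = {u : Pt | dotp (Bd.A e) u < Bd.β e} := by
        ext u; simp [he]
      rw [hset]
      exact isOpen_lt (dotp_continuous _) continuous_const
  refine interior_maximal ?_ hU ?_
  · intro u hu j
    by_cases hj : Bd.A j = 0
    · have h0 : dotp (Bd.A j) u = 0 := by simp [dotp, hj]
      have h0' : dotp (Bd.A j) w = 0 := by simp [dotp, hj]
      rw [h0, ← h0']
      exact hw j
    · exact le_of_lt (hu j hj)
  · intro e he
    exact lt_of_le_of_ne (hw e) (hcon e he)

end RkAux
end

noncomputable section

/-- The rank of a finite subset of the boundary is the sum of the ranks of the trajectories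
of its partition into maximal trajectories; it has full rank iff each such trajectory does. -/
theorem rank_eq_sum_of_maximal_partition (Bd : Board) (P : Piece)
    (l : ℕ) (z : Fin l → Pt) (hinj : Function.Injective z)
    (hfr : ∀ i, z i ∈ frontier Bd.set)
    (F : TrajFamily) (hwf : F.Wf Bd.set P.mv)
    (hpart : F.Partitions (Set.range z)) (hmax : F.Maximal Bd.set P.mv) :
    confRank Bd P z = ∑ k ∈ Finset.range F.m, confRank Bd P (trajConf (F.len k) (F.pts k)) ∧
    (confRank Bd P z = 2 * l ↔
      ∀ k, k < F.m → confRank Bd P (trajConf (F.len k) (F.pts k)) = 2 * F.len k) := by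
  classical
  open RkAux in
  obtain ⟨hpart1, hpart2⟩ := hpart
  -- block and position functions
  have hzmem : ∀ i : Fin l, ∃ k, k < F.m ∧ ∃ i', i' < F.len k ∧ F.pts k i' = z i := by
    intro i
    have hm : z i ∈ Set.range z := ⟨i, rfl⟩
    rw [← hpart1] at hm
    exact hm
  choose blk hblk pos hpos hzpts using hzmem
  have hRcl : IsClosed Bd.set := board_closed Bd
  have hzB : ∀ i, z i ∈ Bd.set := fun i => hRcl.frontier_subset (hfr i)
  have hinj' : ∀ k, k < F.m → ∀ a b, a < F.len k → b < F.len k → F.pts k a = F.pts k b → a = b :=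
    fun k hk => (hwf k hk).2.2.1
  have hne_idx : ∀ i j : Fin l, blk i = blk j → pos i = pos j → i = j := by
    intro i j h1 h2
    apply hinj
    rw [← hzpts i, ← hzpts j, h1, h2]
  have hsurj : ∀ k i', k < F.m → i' < F.len k →
      ∃ i : Fin l, blk i = k ∧ pos i = i' ∧ z i = F.pts k i' := by
    intro k i' hk hi'
    have hm : F.pts k i' ∈ Set.range z := by
      rw [← hpart1]; exact ⟨k, hk, i', hi', rfl⟩
    obtain ⟨i, hi⟩ := hm
    have hbk : blk i = k := by
      by_contra hne
      exact hpart2 (blk i) k (hblk i) hk hne (pos i) i' (hpos i) hi' (by rw [hzpts i, hi])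
    have hpk : pos i = i' := by
      apply hinj' k hk _ _ (hbk ▸ hpos i) hi'
      rw [← hbk, hzpts i, hbk]
      exact hi
    exact ⟨i, hbk, hpk, hi⟩
  -- the embedding linear maps
  let e : ∀ k : ℕ, Conf (F.len k) → Conf l :=
    fun k w j => if h : blk j = k then w ⟨pos j, h ▸ hpos j⟩ else 0
  let E : ∀ k : ℕ, Conf (F.len k) →ₗ[ℝ] Conf l := fun k =>
    { toFun := e k
      map_add' := by
        intro w w'
        funext j
        by_cases h : blk j = k <;> simp [e, h]
      map_smul' := by
        intro c w
        funext j
        by_cases h : blk j = k <;> simp [e, h] }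
  have hEcoord : ∀ k (w : Conf (F.len k)) (j : Fin l) (h : blk j = k),
      E k w j = w ⟨pos j, h ▸ hpos j⟩ := fun k w j h => dif_pos h
  have hEcoord0 : ∀ k (w : Conf (F.len k)) (j : Fin l), blk j ≠ k → E k w j = 0 :=
    fun k w j h => dif_neg h
  have hEunit : ∀ (k : ℕ) (i : Fin l) (hbi : blk i = k) (v : Pt),
      E k (unitVec ⟨pos i, hbi ▸ hpos i⟩ v) = unitVec i v := by
    intro k i hbi v
    funext j
    by_cases h : blk j = k
    · rw [hEcoord _ _ _ h]
      have hiff : ((⟨pos j, h ▸ hpos j⟩ : Fin (F.len k)) = ⟨pos i, hbi ▸ hpos i⟩) ↔ j = i := by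
        constructor
        · intro hc
          exact hne_idx j i (h.trans hbi.symm) (by simpa using congrArg Fin.val hc)
        · intro hc; subst hc; rfl
      simp only [unitVec]
      exact if_congr hiff rfl rfl
    · rw [hEcoord0 _ _ _ h]
      have hji : j ≠ i := fun hc => h (by rw [hc, hbi])
      simp [unitVec, hji]
  have hEattack : ∀ (k : ℕ) (i j : Fin l) (hbi : blk i = k) (hbj : blk j = k) (v : Pt),
      E k (attackNormal ⟨pos i, hbi ▸ hpos i⟩ ⟨pos j, hbj ▸ hpos j⟩ v) = attackNormal i j v := by
    intro k i j hbi hbj v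
    funext j'
    by_cases h : blk j' = k
    · rw [hEcoord _ _ _ h]
      have hiff1 : ((⟨pos j', h ▸ hpos j'⟩ : Fin (F.len k)) = ⟨pos i, hbi ▸ hpos i⟩) ↔ j' = i := by
        constructor
        · intro hc
          exact hne_idx j' i (h.trans hbi.symm) (by simpa using congrArg Fin.val hc)
        · intro hc; subst hc; rfl
      have hiff2 : ((⟨pos j', h ▸ hpos j'⟩ : Fin (F.len k)) = ⟨pos j, hbj ▸ hpos j⟩) ↔ j' = j := by
        constructor
        · intro hc
          exact hne_idx j' j (h.trans hbj.symm) (by simpa using congrArg Fin.val hc)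
        · intro hc; subst hc; rfl
      simp only [attackNormal]
      exact if_congr hiff1 rfl (if_congr hiff2 rfl rfl)
    · rw [hEcoord0 _ _ _ h]
      have h1 : j' ≠ i := fun hc => h (by rw [hc, hbi])
      have h2 : j' ≠ j := fun hc => h (by rw [hc, hbj])
      simp [attackNormal, h1, h2]
  -- the block normal sets and submodules
  let N : ∀ k : ℕ, Set (Conf (F.len k)) :=
    fun k => Prod.fst '' HArr Bd P (trajConf (F.len k) (F.pts k))
  let f : ℕ → Submodule ℝ (Conf l) := fun k => Submodule.map (E k) (Submodule.span ℝ (N k))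
  set S : Submodule ℝ (Conf l) := (Finset.range F.m).sup f with hSdef
  -- fixation normals lie in the block submodules
  have hNfix : ∀ (i : Fin l) (ei : Fin Bd.s), dotp (Bd.A ei) (z i) = Bd.β ei →
      unitVec i (Bd.A ei) ∈ f (blk i) := by
    intro i ei he
    refine Submodule.mem_map.2 ⟨unitVec ⟨pos i, hpos i⟩ (Bd.A ei),
      Submodule.subset_span ?_, hEunit (blk i) i rfl (Bd.A ei)⟩
    refine ⟨(unitVec ⟨pos i, hpos i⟩ (Bd.A ei), Bd.β ei),
      Or.inr ⟨⟨pos i, hpos i⟩, ei, ?_, rfl⟩, rfl⟩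
    show dotp (Bd.A ei) (F.pts (blk i) (pos i)) = Bd.β ei
    rw [hzpts i]; exact he
  -- first inclusion
  have hsub1 : Prod.fst '' HArr Bd P z ⊆ (S : Set (Conf l)) := by
    rintro n ⟨h, hh, rfl⟩
    rcases hh with ⟨i, j, r, hij, hdot, rfl⟩ | ⟨i, ei, he, rfl⟩
    · -- attack hyperplane
      show attackNormal i j (P.anorm r) ∈ S
      have hijne : i ≠ j := Fin.ne_of_lt hij
      by_cases hb : blk j = blk i
      · -- same block
        have hSf : f (blk i) ≤ S := Finset.le_sup (Finset.mem_range.2 (hblk i))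
        apply hSf
        set p₁ : Fin (F.len (blk i)) := ⟨pos i, hpos i⟩ with hp₁
        set p₂ : Fin (F.len (blk i)) := ⟨pos j, hb ▸ hpos j⟩ with hp₂
        have hzi : trajConf (F.len (blk i)) (F.pts (blk i)) p₁ = z i := hzpts i
        have hzj : trajConf (F.len (blk i)) (F.pts (blk i)) p₂ = z j := by
          show F.pts (blk i) (pos j) = z j
          rw [← hb]; exact hzpts j
        have hp : p₁ ≠ p₂ := by
          intro hc
          exact hijne (hne_idx i j hb.symm (by simpa [hp₁, hp₂] using congrArg Fin.val hc))
        rcases lt_or_gt_of_ne hp with hlt | hgt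
        · have hmem : attackNormal p₁ p₂ (P.anorm r) ∈ N (blk i) :=
            ⟨(attackNormal p₁ p₂ (P.anorm r), 0),
              Or.inl ⟨p₁, p₂, r, hlt, by rw [hzi, hzj]; exact hdot, rfl⟩, rfl⟩
          have hmm := Submodule.mem_map_of_mem (f := E (blk i)) (Submodule.subset_span hmem)
          rwa [hEattack (blk i) i j rfl hb (P.anorm r)] at hmm
        · have hdot' : dotp (z j - z i) (P.anorm r) = 0 := by
            have : z j - z i = -(z i - z j) := by abel
            rw [this]
            show (-(z i - z j)).1 * (P.anorm r).1 + (-(z i - z j)).2 * (P.anorm r).2 = 0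
            have hd : (z i - z j).1 * (P.anorm r).1 + (z i - z j).2 * (P.anorm r).2 = 0 := hdot
            simp only [Prod.fst_neg, Prod.snd_neg]
            nlinarith [hd]
          have hmem : attackNormal p₂ p₁ (P.anorm r) ∈ N (blk i) :=
            ⟨(attackNormal p₂ p₁ (P.anorm r), 0),
              Or.inl ⟨p₂, p₁, r, hgt, by rw [hzi, hzj]; exact hdot', rfl⟩, rfl⟩
          have hmm := Submodule.mem_map_of_mem (f := E (blk i)) (Submodule.subset_span hmem)
          rw [hEattack (blk i) j i hb rfl (P.anorm r)] at hmm
          rw [attackNormal_comm i j hijne (P.anorm r)] at hmm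
          simpa [f] using Submodule.neg_mem _ hmm
      · -- different blocks
        have hbne : blk i ≠ blk j := fun hc => hb hc.symm
        have hijz : z i ≠ z j := fun hc => hijne (hinj hc)
        obtain ⟨t, ht⟩ := perp_char (P.anorm r) (z i - z j) (anorm_ne_zero P r) hdot
        have hmveq : ((-(P.anorm r).2, (P.anorm r).1) : Pt) = P.mv r := by
          simp [Piece.anorm, Piece.mv]
        rw [hmveq] at ht
        have hzj' : z j = z i + (-t) • P.mv r := by
          have hz2 : z j = z i - (z i - z j) := by abel
          rw [hz2, ht, sub_eq_add_neg, ← neg_smul]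
        have htne : (-t : ℝ) ≠ 0 := by
          intro h0
          apply hijz
          rw [hzj', h0, zero_smul, add_zero]
        by_cases hmi : meetsInterior Bd.set (P.mv r) (z i)
        · exfalso
          apply hmax (blk i) (blk j) (hblk i) (hblk j) hbne (pos i) (pos j) (hpos i) (hpos j) r
          rw [hzpts i, hzpts j]
          exact ⟨fun hcon => absurd hmi hcon,
            fun _ => ⟨hfr j, fun hc => hijz hc.symm, ⟨-t, hzj'⟩⟩⟩
        · -- line misses interior: midpoint lies on an edge
          set mid : Pt := z i + (-t/2) • P.mv r with hmid
          have hmid2 : ∀ e', dotp (Bd.A e') mid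
              = (dotp (Bd.A e') (z i) + dotp (Bd.A e') (z j)) / 2 := by
            intro e'
            rw [hmid, hzj', dotp_add_smul, dotp_add_smul]; ring
          have hmidB : mid ∈ Bd.set := by
            intro e'
            have h1 := hzB i e'
            have h2 := hzB j e'
            rw [hmid2 e']; linarith
          have hmidni : mid ∉ interior Bd.set := fun hc => hmi ⟨-t/2, hc⟩
          obtain ⟨e', hAne, hAeq⟩ := board_edge_of_not_interior Bd hmidB hmidni
          have hq1 : dotp (Bd.A e') (z i) = Bd.β e' := by
            have h2 := hmid2 e'
            have h3 := hzB i e'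
            have h4 := hzB j e'
            rw [hAeq] at h2; linarith
          have hq2 : dotp (Bd.A e') (z j) = Bd.β e' := by
            have h2 := hmid2 e'
            have h3 := hzB i e'
            have h4 := hzB j e'
            rw [hAeq] at h2; linarith
          have hperp : dotp (Bd.A e') (P.mv r) = 0 := by
            have h3 : dotp (Bd.A e') (z j)
                = dotp (Bd.A e') (z i) + (-t) * dotp (Bd.A e') (P.mv r) := by
              rw [hzj', dotp_add_smul]
            rw [hq1, hq2] at h3
            have h4 : (-t) * dotp (Bd.A e') (P.mv r) = 0 := by linarith
            exact (mul_eq_zero.1 h4).resolve_left htne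
          obtain ⟨μ, hμ⟩ := perp_char (P.mv r) (Bd.A e') (mv_ne_zero P r) hperp
          have hanorm : ((-(P.mv r).2, (P.mv r).1) : Pt) = -P.anorm r := by
            simp [Piece.anorm, Piece.mv, Prod.ext_iff]
          rw [hanorm] at hμ
          have hμne : μ ≠ 0 := by
            intro h0; exact hAne (by rw [hμ, h0, zero_smul])
          have hback : P.anorm r = (-μ)⁻¹ • Bd.A e' := by
            rw [hμ, smul_neg, ← neg_smul, smul_smul,
              inv_mul_cancel₀ (neg_ne_zero.2 hμne), one_smul]
          have hrep : attackNormal i j (P.anorm r)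
              = (-μ)⁻¹ • (unitVec i (Bd.A e') - unitVec j (Bd.A e')) := by
            funext k'
            simp only [attackNormal, unitVec, Pi.smul_apply, Pi.sub_apply]
            by_cases h1' : k' = i
            · subst h1'
              simp [hijne, hback]
            · by_cases h2' : k' = j
              · subst h2'
                simp [h1', hback]
              · simp [h1', h2']
          rw [hrep]
          refine Submodule.smul_mem _ _ (Submodule.sub_mem _ ?_ ?_)
          · exact Finset.le_sup (f := f) (Finset.mem_range.2 (hblk i)) (hNfix i e' hq1)
          · exact Finset.le_sup (f := f) (Finset.mem_range.2 (hblk j)) (hNfix j e' hq2)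
    · -- fixation hyperplane
      show unitVec i (Bd.A ei) ∈ S
      exact Finset.le_sup (f := f) (Finset.mem_range.2 (hblk i)) (hNfix i ei he)
  -- second inclusion
  have hsub2 : S ≤ Submodule.span ℝ (Prod.fst '' HArr Bd P z) := by
    apply Finset.sup_le
    intro k hk
    rw [Finset.mem_range] at hk
    show Submodule.map (E k) (Submodule.span ℝ (N k)) ≤ _
    rw [Submodule.map_span]
    apply Submodule.span_le.2
    rintro x ⟨nn, ⟨hp, hh, rfl⟩, rfl⟩
    rcases hh with ⟨i0, j0, r, hij0, hdot0, rfl⟩ | ⟨i0, ei, he0, rfl⟩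
    · -- block attack normal
      obtain ⟨i, hbi, hpi, hzi⟩ := hsurj k i0 hk i0.isLt
      obtain ⟨j, hbj, hpj, hzj⟩ := hsurj k j0 hk j0.isLt
      have hi0 : (⟨pos i, hbi ▸ hpos i⟩ : Fin (F.len k)) = i0 := Fin.ext hpi
      have hj0 : (⟨pos j, hbj ▸ hpos j⟩ : Fin (F.len k)) = j0 := Fin.ext hpj
      have hE' : E k (attackNormal i0 j0 (P.anorm r)) = attackNormal i j (P.anorm r) := by
        rw [← hi0, ← hj0]
        exact hEattack k i j hbi hbj (P.anorm r)
      have hne0 : i ≠ j := by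
        intro hc
        apply Fin.ne_of_lt hij0
        apply Fin.ext
        rw [← hpi, ← hpj, hc]
      have hdz : dotp (z i - z j) (P.anorm r) = 0 := by
        rw [hzi, hzj]; exact hdot0
      have hdz' : dotp (z j - z i) (P.anorm r) = 0 := by
        have hzz : z j - z i = -(z i - z j) := by abel
        rw [hzz]
        show (-(z i - z j)).1 * (P.anorm r).1 + (-(z i - z j)).2 * (P.anorm r).2 = 0
        have hd : (z i - z j).1 * (P.anorm r).1 + (z i - z j).2 * (P.anorm r).2 = 0 := hdz
        simp only [Prod.fst_neg, Prod.snd_neg]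
        nlinarith [hd]
      show E k (attackNormal i0 j0 (P.anorm r)) ∈ _
      rw [hE']
      rcases lt_or_gt_of_ne hne0 with hlt | hgt
      · exact Submodule.subset_span
          ⟨(attackNormal i j (P.anorm r), 0), Or.inl ⟨i, j, r, hlt, hdz, rfl⟩, rfl⟩
      · have hmem : attackNormal j i (P.anorm r)
            ∈ Submodule.span ℝ (Prod.fst '' HArr Bd P z) :=
          Submodule.subset_span
            ⟨(attackNormal j i (P.anorm r), 0), Or.inl ⟨j, i, r, hgt, hdz', rfl⟩, rfl⟩
        rw [attackNormal_comm j i (fun hc => hne0 hc.symm) (P.anorm r)]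
        exact Submodule.neg_mem _ hmem
    · -- block fixation normal
      obtain ⟨i, hbi, hpi, hzi⟩ := hsurj k i0 hk i0.isLt
      have hi0 : (⟨pos i, hbi ▸ hpos i⟩ : Fin (F.len k)) = i0 := Fin.ext hpi
      have hE' : E k (unitVec i0 (Bd.A ei)) = unitVec i (Bd.A ei) := by
        rw [← hi0]
        exact hEunit k i hbi (Bd.A ei)
      show E k (unitVec i0 (Bd.A ei)) ∈ _
      rw [hE']
      refine Submodule.subset_span ⟨(unitVec i (Bd.A ei), Bd.β ei),
        Or.inr ⟨i, ei, ?_, rfl⟩, rfl⟩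
      rw [hzi]; exact he0
  have hspan : Submodule.span ℝ (Prod.fst '' HArr Bd P z) = S :=
    le_antisymm (Submodule.span_le.2 hsub1) hsub2
  -- support bound
  have hfk_le : ∀ k, f k ≤ supportedOn blk {k} := by
    intro k x hx j hj
    simp only [Set.mem_singleton_iff] at hj
    obtain ⟨w, _, rfl⟩ := hx
    exact hEcoord0 k w j hj
  have hrank1 : confRank Bd P z = ∑ k ∈ Finset.range F.m, Module.finrank ℝ (f k) := by
    show Module.finrank ℝ (Submodule.span ℝ (Prod.fst '' HArr Bd P z)) = _
    rw [hspan]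
    exact finrank_sup_range blk f hfk_le F.m
  have hfk_eq : ∀ k, k < F.m →
      Module.finrank ℝ (f k) = confRank Bd P (trajConf (F.len k) (F.pts k)) := by
    intro k hk
    have hinjE : Function.Injective (E k) := by
      intro w w' hww
      funext i0
      obtain ⟨i, hbi, hpi, _⟩ := hsurj k i0 hk i0.isLt
      have h1 := congrFun hww i
      rw [hEcoord k w i hbi, hEcoord k w' i hbi] at h1
      have hi0 : (⟨pos i, hbi ▸ hpos i⟩ : Fin (F.len k)) = i0 := Fin.ext hpi
      rwa [hi0] at h1
    exact ((Submodule.equivMapOfInjective (E k) hinjE (Submodule.span ℝ (N k))).finrank_eq).symm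
  have hsum : confRank Bd P z
      = ∑ k ∈ Finset.range F.m, confRank Bd P (trajConf (F.len k) (F.pts k)) := by
    rw [hrank1]
    exact Finset.sum_congr rfl (fun k hk => hfk_eq k (Finset.mem_range.1 hk))
  -- cardinality
  have hcard : l = ∑ k ∈ Finset.range F.m, F.len k := by
    have hbij : Function.Bijective
        (fun i : Fin l => (⟨⟨blk i, hblk i⟩, ⟨pos i, hpos i⟩⟩ : Σ k : Fin F.m, Fin (F.len k))) := by
      constructor
      · intro i j hijs
        have h1 : blk i = blk j := congrArg (fun p : Σ k : Fin F.m, Fin (F.len ↑k) => (p.1 : ℕ)) hijs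
        have h2 : pos i = pos j := congrArg (fun p : Σ k : Fin F.m, Fin (F.len ↑k) => (p.2 : ℕ)) hijs
        exact hne_idx i j h1 h2
      · rintro ⟨⟨k, hk⟩, ⟨i0, hi0⟩⟩
        obtain ⟨i, hbi, hpi, _⟩ := hsurj k i0 hk hi0
        refine ⟨i, ?_⟩
        subst hbi
        subst hpi
        rfl
    have hc := Fintype.card_of_bijective hbij
    rw [Fintype.card_fin, Fintype.card_sigma] at hc
    simpa [Fin.sum_univ_eq_sum_range] using hc
  have hblock_le : ∀ k, confRank Bd P (trajConf (F.len k) (F.pts k)) ≤ 2 * F.len k := by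
    intro k
    have h1 : confRank Bd P (trajConf (F.len k) (F.pts k))
        ≤ Module.finrank ℝ (Conf (F.len k)) := Submodule.finrank_le _
    have h2 : Module.finrank ℝ (Conf (F.len k)) = 2 * F.len k := by
      rw [Module.finrank_pi_fintype]
      have h3 : Module.finrank ℝ Pt = 2 := by
        rw [Module.finrank_prod, Module.finrank_self]
      simp [h3, mul_comm]
    omega
  refine ⟨hsum, ?_⟩
  constructor
  · intro h k hk
    rw [hsum] at h
    have h2l' : (2 * l : ℕ) = ∑ k ∈ Finset.range F.m, 2 * F.len k := by
      rw [hcard, Finset.mul_sum]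
    rw [h2l'] at h
    exact (Finset.sum_eq_sum_iff_of_le (fun k _ => hblock_le k)).1 h k (Finset.mem_range.2 hk)
  · intro h
    rw [hsum]
    have h2l' : (2 * l : ℕ) = ∑ k ∈ Finset.range F.m, 2 * F.len k := by
      rw [hcard, Finset.mul_sum]
    rw [h2l']
    exact Finset.sum_congr rfl (fun k hk => h k (Finset.mem_range.1 hk))

end
end
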